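/- arXiv:2011.08830 — 8 statements merged into one kernel-verified Lean document; each statement's English description precedes it below -/
import Mathlib

section
/- Let d0, d1, d2, d3 be nonnegative integers and set D := d1 + d2 + d3 − d0 (an integer, possibly negative). Then in ℚ(s) one has the identity ∑_{k ≥ 0} [D choose k]_s · [D − k choose d1]_s · [D − k choose d2]_s · [D − k choose d3]_s · [d0 choose k + 2d0 − d1 − d2 − d3]_s = [d3 choose d0 − d1]_s · [d3 choose d0 − d2]_s · [d0 choose d3]_s · [D choose d3]_s, where the sum is finite because all but finitely many terms vanish. -/
open scoped BigOperators

/-- The balanced `q`-integer `[n]_s := s^n - s^{-n}` in the field `ℚ(s)` of rational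
functions, where `s` plays the role of `q^{1/2}`. -/
noncomputable def qint (n : ℤ) : RatFunc ℚ := RatFunc.X ^ n - RatFunc.X ^ (-n)

/-- The balanced `q`-factorial `[n]_s! := ∏_{j=1}^n [j]_s` in `ℚ(s)`. -/
noncomputable def qfact (n : ℕ) : RatFunc ℚ := ∏ j ∈ Finset.range n, qint (j + 1)

/-- The balanced `q`-binomial coefficient `[n choose m]_s`, equal to
`[n]_s!/([m]_s! [n-m]_s!)` if `0 ≤ m ≤ n` and `0` otherwise. -/
noncomputable def qbinom (n m : ℤ) : RatFunc ℚ :=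
  if 0 ≤ m ∧ m ≤ n then qfact n.toNat / (qfact m.toNat * qfact (n - m).toNat) else 0

/-!
After the substitution `k = a - i` with `a = d1 + d2 - d0`, the symmetry of the `q`-binomials and
trinomial revision `[D, d3 + i][d3 + i, d3] = [D, d3][a, i]` turn the left side into `[D, d3]`
times the balanced `q`-Pfaff–Saalschütz sum
`S(a; x, y; h) = ∑ᵢ [a, i][h + i, x][h + i, y][x + y - a, h + i]` at `x = d1`, `y = d2`, `h = d3`
(if `a < 0`, both sides vanish because `D < d3`). Its value `[h, x - a][h, y - a][x + y - a, h]`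
follows by induction on `a` from the recurrence
`[h + a + 1 - y] S(a + 1; x + 1, y; h) = [y - a] S(a; x, y; h)`, which is a telescoping sum over
`i ∈ ℤ` thanks to the WZ certificate `saalschutzCert` (as produced by Zeilberger's algorithm).
Where the leading coefficient vanishes one uses the symmetry `x ↔ y` instead, and if both
coefficients vanish, `S` has a single nonzero term.
-/

theorem finsum_add_one_sub_eq_zero {M : Type*} [AddCommGroup M] {G : ℤ → M}
    (hG : G.HasFiniteSupport) : ∑ᶠ i, (G (i + 1) - G i) = 0 := by
  rw [finsum_sub_distrib (f := fun i => G (i + 1)) (hG.comp_of_injective (add_left_injective 1)) hG,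
    sub_eq_zero]
  exact finsum_comp_equiv (Equiv.addRight 1)

theorem finsum_comp_natCast {M : Type*} [AddCommMonoid M] {f : ℤ → M} (hf : ∀ k < 0, f k = 0) :
    ∑ᶠ n : ℕ, f n = ∑ᶠ k : ℤ, f k := by
  rw [← finsum_mem_range Nat.cast_injective]
  refine (finsum_mem_inter_support_eq' f _ Set.univ fun k hk => ?_).trans (finsum_mem_univ f)
  have : 0 ≤ k := not_lt.mp fun hk' => hk (hf k hk')
  exact ⟨fun _ => trivial, fun _ => ⟨k.toNat, Int.toNat_of_nonneg this⟩⟩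

theorem RatFunc.X_zpow_ne_one {K : Type*} [Field K] {m : ℤ} (hm : m ≠ 0) :
    (X : RatFunc K) ^ m ≠ 1 := by
  have X_pow_ne_one (k : ℕ) (hk : k ≠ 0) : (X : RatFunc K) ^ k ≠ 1 := fun h => by
    have : (Polynomial.X ^ k : Polynomial K) = 1 := algebraMap_injective K (by simpa using h)
    simpa [hk] using congrArg Polynomial.natDegree this
  rcases Int.eq_nat_or_neg m with ⟨k, rfl | rfl⟩
  · simpa using X_pow_ne_one k (by omega)
  · simpa using X_pow_ne_one k (by omega)

local notation "X" => (RatFunc.X : RatFunc ℚ)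

lemma qint_zero : qint 0 = 0 := by simp [qint]

lemma qint_ne_zero {n : ℤ} (hn : n ≠ 0) : qint n ≠ 0 := by
  intro h
  apply RatFunc.X_zpow_ne_one (K := ℚ) (show n + n ≠ 0 by omega)
  rw [show n + n = n - -n by ring, zpow_sub₀ RatFunc.X_ne_zero, sub_eq_zero.mp h,
    div_self (zpow_ne_zero _ RatFunc.X_ne_zero)]

lemma qint_add (u v : ℤ) : qint (u + v) = X ^ (-u) * qint v + X ^ v * qint u := by
  simp only [qint, mul_sub, ← zpow_add₀ (RatFunc.X_ne_zero (K := ℚ))]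
  ring_nf

lemma qfact_zero : qfact 0 = 1 := by simp [qfact]

lemma qfact_succ (n : ℕ) : qfact (n + 1) = qfact n * qint (n + 1) := Finset.prod_range_succ _ n

@[simp]
lemma qfact_ne_zero (n : ℕ) : qfact n ≠ 0 :=
  Finset.prod_ne_zero_iff.mpr fun j _ => qint_ne_zero (by omega)

lemma qfact_toNat_of_pos {n : ℤ} (hn : 0 < n) : qfact n.toNat = qfact (n - 1).toNat * qint n := by
  obtain ⟨k, hk⟩ := Int.eq_ofNat_of_zero_le (show 0 ≤ n - 1 by omega)
  obtain rfl : n = k + 1 := by omega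
  simpa [show (k + 1 : ℤ).toNat = k + 1 by omega] using qfact_succ k

lemma qbinom_of_neg {n m : ℤ} (hm : m < 0) : qbinom n m = 0 := if_neg (by omega)

lemma qbinom_of_lt {n m : ℤ} (h : n < m) : qbinom n m = 0 := if_neg (by omega)

lemma qbinom_of_neg_left {n m : ℤ} (hn : n < 0) : qbinom n m = 0 := if_neg (by omega)

lemma qbinom_eq_zero_of_notMem_Icc {n m : ℤ} (h : m ∉ Set.Icc 0 n) : qbinom n m = 0 := if_neg h

lemma qbinom_of_le {n m : ℤ} (hm : 0 ≤ m) (h : m ≤ n) :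
    qbinom n m = qfact n.toNat / (qfact m.toNat * qfact (n - m).toNat) := if_pos ⟨hm, h⟩

lemma qbinom_zero_right {n : ℤ} (hn : 0 ≤ n) : qbinom n 0 = 1 := by
  rw [qbinom_of_le le_rfl hn, sub_zero, Int.toNat_zero, qfact_zero, one_mul,
    div_self (qfact_ne_zero _)]

lemma qbinom_symm (n m : ℤ) : qbinom n (n - m) = qbinom n m := by
  rcases lt_or_ge m 0 with hm | hm
  · rw [qbinom_of_neg hm, qbinom_of_lt (by omega)]
  rcases lt_or_ge n m with hn | hn
  · rw [qbinom_of_lt hn, qbinom_of_neg (by omega)]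
  rw [qbinom_of_le (by omega) (by omega), qbinom_of_le hm hn, sub_sub_cancel, mul_comm]

lemma qbinom_self {n : ℤ} (hn : 0 ≤ n) : qbinom n n = 1 := by
  rw [← qbinom_symm, sub_self, qbinom_zero_right hn]

lemma qbinom_sub_one_mul_qint (n m : ℤ) :
    qbinom n (m - 1) * qint (n - m + 1) = qbinom n m * qint m := by
  rcases le_or_gt m 0 with hm | hm
  · rw [qbinom_of_neg (by omega), zero_mul]
    rcases hm.lt_or_eq with hm | rfl
    · rw [qbinom_of_neg hm, zero_mul]
    · rw [qint_zero, mul_zero]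
  rcases lt_or_ge n m with hn | hn
  · rw [qbinom_of_lt hn, zero_mul]
    rcases (show n + 1 ≤ m by omega).lt_or_eq with hn | hn
    · rw [qbinom_of_lt (by omega), zero_mul]
    · rw [show n - m + 1 = 0 by omega, qint_zero, mul_zero]
  rw [qbinom_of_le (by omega) (by omega), qbinom_of_le (by omega) hn,
    show n - (m - 1) = n - m + 1 by ring, qfact_toNat_of_pos hm,
    qfact_toNat_of_pos (show 0 < n - m + 1 by omega), add_sub_cancel_right]
  have := qint_ne_zero hm.ne'
  have := qint_ne_zero (show n - m + 1 ≠ 0 by omega)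
  field_simp

lemma qint_mul_qbinom_sub_one (n m : ℤ) :
    qint n * qbinom (n - 1) m = qint (n - m) * qbinom n m := by
  rcases lt_or_ge m 0 with hm | hm
  · rw [qbinom_of_neg hm, qbinom_of_neg hm, mul_zero, mul_zero]
  rcases le_or_gt n m with hn | hn
  · rw [qbinom_of_lt (by omega), mul_zero]
    rcases hn.lt_or_eq with hn | rfl
    · rw [qbinom_of_lt hn, mul_zero]
    · rw [sub_self, qint_zero, zero_mul]
  rw [qbinom_of_le hm (by omega), qbinom_of_le hm hn.le, qfact_toNat_of_pos (by omega : 0 < n),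
    qfact_toNat_of_pos (show 0 < n - m by omega), sub_right_comm]
  have := qint_ne_zero (show n - m ≠ 0 by omega)
  field_simp

lemma qbinom_add_one_left {n : ℤ} (hn : 0 ≤ n) (m : ℤ) :
    qbinom (n + 1) m = X ^ (-m) * qbinom n m + X ^ (n + 1 - m) * qbinom n (m - 1) := by
  rcases lt_or_ge m 0 with hm | hm
  · rw [qbinom_of_neg hm, qbinom_of_neg hm, qbinom_of_neg (by omega)]
    ring
  rcases lt_or_ge (n + 1) m with hnm | hnm
  · rw [qbinom_of_lt hnm, qbinom_of_lt (by omega), qbinom_of_lt (by omega)]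
    ring
  rcases hm.lt_or_eq with hm | rfl
  swap
  · rw [qbinom_zero_right (by omega), qbinom_zero_right hn, qbinom_of_neg (by omega)]
    simp
  rcases hnm.lt_or_eq with hnm | rfl
  swap
  · rw [qbinom_self (by omega), qbinom_of_lt (by omega), add_sub_cancel_right, qbinom_self hn]
    simp
  rw [qbinom_of_le hm.le hnm.le, qbinom_of_le hm.le (by omega), qbinom_of_le (by omega) (by omega),
    qfact_toNat_of_pos (show 0 < n + 1 by omega), qfact_toNat_of_pos hm,
    qfact_toNat_of_pos (show 0 < n + 1 - m by omega), add_sub_cancel_right,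
    show n - (m - 1) = n + 1 - m by ring, qfact_toNat_of_pos (show 0 < n + 1 - m by omega),
    show n + 1 - m - 1 = n - m by ring]
  have hsplit := qint_add m (n + 1 - m)
  rw [add_sub_cancel] at hsplit
  have := qint_ne_zero hm.ne'
  have := qint_ne_zero (show n + 1 - m ≠ 0 by omega)
  rw [hsplit]
  field_simp

lemma qbinom_mul (n j k : ℤ) :
    qbinom n j * qbinom j k = qbinom n k * qbinom (n - k) (j - k) := by
  rcases lt_or_ge k 0 with hk | hk
  · rw [qbinom_of_neg hk, qbinom_of_neg hk, mul_zero, zero_mul]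
  rcases lt_or_ge j k with hj | hj
  · rw [qbinom_of_lt hj, qbinom_of_neg (show j - k < 0 by omega), mul_zero, mul_zero]
  rcases lt_or_ge n j with hn | hn
  · rw [qbinom_of_lt hn, qbinom_of_lt (show n - k < j - k by omega), zero_mul, mul_zero]
  rw [qbinom_of_le (by omega) hn, qbinom_of_le hk hj, qbinom_of_le hk (by omega),
    qbinom_of_le (by omega) (by omega), show n - k - (j - k) = n - j by ring]
  field_simp

lemma qbinom_contiguous (a : ℕ) {h i : ℤ} (hi : 0 ≤ h + i) (x y : ℤ) :
    qint (h + a + 1 - y) * (qbinom (a + 1) i * qbinom (h + i) (x + 1))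
      - qint (y - a) * (qbinom a i * qbinom (h + i) x)
    = qint (h + i - y) * (qbinom a (i - 1) * qbinom (h + i) (x + 1))
      - qint (x + y - a - h - i) * (qbinom a i * qbinom (h + i + 1) (x + 1)) := by
  have pascal_a := qbinom_add_one_left (Int.natCast_nonneg a) i
  have pascal_n := qbinom_add_one_left hi (x + 1)
  have ratio_a := qbinom_sub_one_mul_qint a i
  have ratio_n := qbinom_sub_one_mul_qint (h + i) (x + 1)
  simp only [add_sub_cancel_right] at pascal_n ratio_n
  linear_combination (norm := skip) (qint (h + a + 1 - y) * qbinom (h + i) (x + 1)) * pascal_a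
    + (qint (x + y - a - h - i) * qbinom a i) * pascal_n
    - (X ^ (a - y + h + i - x) * qbinom a i) * ratio_n
    + (X ^ (h + a + 1 - y) * qbinom (h + i) (x + 1)) * ratio_a
  -- splitting every exponent into `X ^ a`, `X ^ h`, ... turns the rest into a rational identity
  have hX : (X : RatFunc ℚ) ≠ 0 := RatFunc.X_ne_zero
  simp only [qint, zpow_add₀ hX, zpow_sub₀ hX, zpow_neg, zpow_one]
  field_simp
  ring

noncomputable def saalschutzTerm (a : ℕ) (x y h i : ℤ) : RatFunc ℚ :=
  qbinom a i * qbinom (h + i) x * qbinom (h + i) y * qbinom (x + y - a) (h + i)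

noncomputable def saalschutzSum (a : ℕ) (x y h : ℤ) : RatFunc ℚ :=
  ∑ᶠ i, saalschutzTerm a x y h i

noncomputable def saalschutzCert (a : ℕ) (x y h i : ℤ) : RatFunc ℚ :=
  -(qint (h + i) * qbinom a (i - 1) * qbinom (h + i) (x + 1) * qbinom (h + i - 1) y *
    qbinom (x + y - a) (h + i))

lemma saalschutzTerm_hasFiniteSupport (a : ℕ) (x y h : ℤ) :
    (saalschutzTerm a x y h).HasFiniteSupport :=
  (Set.finite_Icc 0 (a : ℤ)).subset <| Function.support_subset_iff'.2 fun i hi => by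
    simp [saalschutzTerm, qbinom_eq_zero_of_notMem_Icc hi]

lemma saalschutzCert_hasFiniteSupport (a : ℕ) (x y h : ℤ) :
    (saalschutzCert a x y h).HasFiniteSupport :=
  (Set.finite_Icc 1 (a + 1 : ℤ)).subset <| Function.support_subset_iff'.2 fun i hi => by
    have : i - 1 ∉ Set.Icc 0 (a : ℤ) := by simp only [Set.mem_Icc] at hi ⊢; omega
    simp [saalschutzCert, qbinom_eq_zero_of_notMem_Icc this]

lemma saalschutzCert_sub (a : ℕ) (x y h i : ℤ) :
    qint (h + a + 1 - y) * saalschutzTerm (a + 1) (x + 1) y h i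
      - qint (y - a) * saalschutzTerm a x y h i
    = saalschutzCert a x y h (i + 1) - saalschutzCert a x y h i := by
  have hd : x + 1 + y - ((a + 1 : ℕ) : ℤ) = x + y - a := by push_cast; ring
  simp only [saalschutzTerm, saalschutzCert, hd, add_sub_cancel_right, ← add_assoc]
  push_cast
  rcases lt_or_ge i 0 with hi | hi
  · simp [qbinom_of_neg hi, qbinom_of_neg (show i - 1 < 0 by omega)]
  rcases lt_or_ge (h + i) 0 with hhi | hhi
  · simp [qbinom_of_neg_left hhi]
  have core := qbinom_contiguous a hhi x y
  have step_d0 := qbinom_sub_one_mul_qint (x + y - a) (h + i + 1)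
  have step_y := qint_mul_qbinom_sub_one (h + i) y
  rw [add_sub_cancel_right, show x + y - a - (h + i + 1) + 1 = x + y - a - h - i by ring] at step_d0
  linear_combination qbinom (h + i) y * qbinom (x + y - a) (h + i) * core
    - qbinom a i * qbinom (h + i + 1) (x + 1) * qbinom (h + i) y * step_d0
    - qbinom a (i - 1) * qbinom (h + i) (x + 1) * qbinom (x + y - a) (h + i) * step_y

lemma saalschutzSum_recurrence (a : ℕ) (x y h : ℤ) :
    qint (h + a + 1 - y) * saalschutzSum (a + 1) (x + 1) y h
      = qint (y - a) * saalschutzSum a x y h := by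
  rw [← sub_eq_zero, saalschutzSum, saalschutzSum, mul_finsum, mul_finsum,
    ← finsum_sub_distrib ((saalschutzTerm_hasFiniteSupport _ _ _ _).fun_mul_right _)
      ((saalschutzTerm_hasFiniteSupport _ _ _ _).fun_mul_right _)]
  simp_rw [saalschutzCert_sub]
  exact finsum_add_one_sub_eq_zero (saalschutzCert_hasFiniteSupport a x y h)

lemma saalschutzSum_comm (a : ℕ) (x y h : ℤ) : saalschutzSum a x y h = saalschutzSum a y x h := by
  simp only [saalschutzSum, saalschutzTerm, add_comm x y, mul_right_comm _ (qbinom (h + _) x)]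

lemma saalschutzSum_zero (x y h : ℤ) :
    saalschutzSum 0 x y h = qbinom h x * qbinom h y * qbinom (x + y) h := by
  rw [saalschutzSum, finsum_eq_single _ 0 fun i hi => by
    simp [saalschutzTerm, qbinom_eq_zero_of_notMem_Icc (n := 0) (m := i) (by simpa using hi)]]
  simp [saalschutzTerm, qbinom_self le_rfl]

lemma saalschutzSum_diagonal (a : ℕ) (h : ℤ) :
    saalschutzSum (a + 1) (h + a + 1) (h + a + 1) h
      = qbinom h h * qbinom h h * qbinom (2 * h + a + 1) h := by
  rw [saalschutzSum, finsum_eq_single _ ((a : ℤ) + 1) fun i hi => by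
    rcases lt_or_ge i (a + 1) with hi' | hi'
    · simp [saalschutzTerm, qbinom_of_lt (show h + i < h + a + 1 by omega)]
    · simp [saalschutzTerm, qbinom_of_lt (show (a : ℤ) + 1 < i by omega)]]
  rw [saalschutzTerm, show h + a + 1 + (h + a + 1) - ((a + 1 : ℕ) : ℤ) = 2 * h + a + 1 by
    push_cast; ring, ← add_assoc]
  rcases lt_or_ge h 0 with hh | hh
  · simp [qbinom_of_neg hh, qbinom_of_lt (show 2 * h + a + 1 < h + a + 1 by omega)]
  rw [← qbinom_symm (2 * h + a + 1) h, show 2 * h + a + 1 - h = h + a + 1 by ring]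
  push_cast
  simp [qbinom_self hh, qbinom_self (show 0 ≤ h + a + 1 by omega),
    qbinom_self (show (0 : ℤ) ≤ a + 1 by omega)]

theorem saalschutzSum_eq (a : ℕ) (x y h : ℤ) :
    saalschutzSum a x y h = qbinom h (x - a) * qbinom h (y - a) * qbinom (x + y - a) h := by
  induction a generalizing x y with
  | zero => simpa using saalschutzSum_zero x y h
  | succ a ih =>
    push_cast
    have succ_of_ne (x y : ℤ) (hy : h + a + 1 - y ≠ 0) : saalschutzSum (a + 1) x y h
        = qbinom h (x - (a + 1)) * qbinom h (y - (a + 1)) * qbinom (x + y - (a + 1)) h := by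
      obtain ⟨x, rfl⟩ : ∃ x', x = x' + 1 := ⟨x - 1, by ring⟩
      refine mul_left_cancel₀ (qint_ne_zero hy) ?_
      have ratio := qbinom_sub_one_mul_qint h (y - a)
      rw [show h - (y - a) + 1 = h + a + 1 - y by ring] at ratio
      rw [saalschutzSum_recurrence, ih, show x + 1 - (a + 1) = x - a by ring,
        show y - (a + 1) = y - a - 1 by ring, show x + 1 + y - (a + 1) = x + y - a by ring]
      linear_combination -(qbinom h (x - a) * qbinom (x + y - a) h * ratio)
    by_cases hy : h + a + 1 - y = 0
    swap
    · exact succ_of_ne x y hy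
    by_cases hx : h + a + 1 - x = 0
    swap
    · rw [saalschutzSum_comm, succ_of_ne y x hx, add_comm x y]
      ring
    obtain rfl : x = h + a + 1 := by omega
    obtain rfl : y = h + a + 1 := by omega
    rw [saalschutzSum_diagonal]
    ring_nf

noncomputable def dP3Summand (D d0 d1 d2 d3 k : ℤ) : RatFunc ℚ :=
  qbinom D k * qbinom (D - k) d1 * qbinom (D - k) d2 * qbinom (D - k) d3 *
    qbinom d0 (k + 2 * d0 - d1 - d2 - d3)

lemma dP3Summand_sub {D d0 d1 d2 d3 : ℤ} {a : ℕ} (ha : (a : ℤ) = d1 + d2 - d0)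
    (hD : D = d1 + d2 + d3 - d0) (i : ℤ) :
    dP3Summand D d0 d1 d2 d3 (a - i) = qbinom D d3 * saalschutzTerm a d1 d2 d3 i := by
  have trinomial := qbinom_mul D (d3 + i) d3
  rw [show D - d3 = a by omega, add_sub_cancel_left] at trinomial
  rw [dP3Summand, saalschutzTerm, show D - (a - i) = d3 + i by omega,
    show (a : ℤ) - i = D - (d3 + i) by omega, qbinom_symm,
    show D - (d3 + i) + 2 * d0 - d1 - d2 - d3 = d0 - (d3 + i) by omega, qbinom_symm,
    show d1 + d2 - a = d0 by omega]
  linear_combination qbinom (d3 + i) d1 * qbinom (d3 + i) d2 * qbinom d0 (d3 + i) * trinomial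

/-- The `q`-Pfaff–Saalschütz-type identity (Theorem 4.4 for `dP₃(1,1)`): for nonnegative
integers `d0, d1, d2, d3` and `D = d1 + d2 + d3 - d0`,
`∑_{k ≥ 0} [D,k][D-k,d1][D-k,d2][D-k,d3][d0, k+2d0-d1-d2-d3]
 = [d3, d0-d1][d3, d0-d2][d0, d3][D, d3]` in `ℚ(s)`. -/
theorem stmt0 (d0 d1 d2 d3 : ℕ) (D : ℤ) (hD : D = (d1 : ℤ) + d2 + d3 - d0) :
    (∑ᶠ k : ℕ,
      qbinom D (k : ℤ) * qbinom (D - (k : ℤ)) (d1 : ℤ) * qbinom (D - (k : ℤ)) (d2 : ℤ) *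
        qbinom (D - (k : ℤ)) (d3 : ℤ) *
        qbinom (d0 : ℤ) ((k : ℤ) + 2 * (d0 : ℤ) - (d1 : ℤ) - (d2 : ℤ) - (d3 : ℤ)))
    = qbinom (d3 : ℤ) ((d0 : ℤ) - (d1 : ℤ)) * qbinom (d3 : ℤ) ((d0 : ℤ) - (d2 : ℤ)) *
        qbinom (d0 : ℤ) (d3 : ℤ) * qbinom D (d3 : ℤ) := by
  show ∑ᶠ k : ℕ, dP3Summand D d0 d1 d2 d3 k = _
  rcases lt_or_ge ((d1 : ℤ) + d2) d0 with ha | ha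
  · rw [qbinom_of_lt (show D < d3 by omega), mul_zero]
    exact finsum_eq_zero_of_forall_eq_zero fun k => by
      rw [dP3Summand, qbinom_of_lt (show D - k < d3 by omega), mul_zero, zero_mul]
  obtain ⟨a, ha⟩ : ∃ a : ℕ, (a : ℤ) = d1 + d2 - d0 := ⟨_, Int.toNat_of_nonneg (by omega)⟩
  rw [finsum_comp_natCast fun k hk => by rw [dP3Summand, qbinom_of_neg hk]; simp,
    ← finsum_comp_equiv (Equiv.subLeft (a : ℤ))]
  simp only [Equiv.subLeft_apply, dP3Summand_sub ha hD]
  rw [← mul_finsum, ← saalschutzSum, saalschutzSum_eq, show (d1 : ℤ) - a = d0 - d2 by omega,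
    show (d2 : ℤ) - a = d0 - d1 by omega, show (d1 : ℤ) + d2 - a = d0 by omega]
  ring
end

section
/- Let d, m, n be positive integers with d ∣ m and m ∣ n, let ω ∈ ℂ be a primitive d-th root of unity, and let G(q) := binom(n, m)_q ∈ ℤ[q] be the Gaussian binomial polynomial. Then 2ω·G′(ω) = m(n − m)·G(ω), where G′ is the formal derivative of G. Equivalently, the derivative of the balanced q-binomial q^{−m(n−m)/2}·binom(n, m)_q vanishes at q = ω. -/
open scoped BigOperators

/-- `G` is the Gaussian binomial polynomial `binom(n, m)_q ∈ ℤ[q]`, characterised by the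
product formula `binom(n,m)_q = ∏_{j=1}^m (1 - q^{n-m+j})/(1 - q^j)` for `m ≤ n`
(written multiplicatively to stay inside `ℤ[q]`), and by `binom(n,m)_q = 0` for `m > n`. -/
def IsGaussBinom (n m : ℕ) (G : Polynomial ℤ) : Prop :=
  if m ≤ n then
    G * ∏ j ∈ Finset.range m, (1 - Polynomial.X ^ (j + 1)) =
      ∏ j ∈ Finset.range m, (1 - Polynomial.X ^ (n - m + (j + 1)))
  else G = 0

/-!
Write `1 - q^t = (1 - q^d) * r_t` with `r_t = 1 + q^d + ⋯ + q^(t-d)` when `d ∣ t`, and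
`r_t = 1 - q^t` otherwise. As `d ∣ n - m`, the factors `1 - q^d` cancel from the product formula,
leaving `G * ∏ r_j = ∏ r_(n-m+j)` with no factor vanishing at `ω`. Comparing logarithmic
derivatives at `ω`, the pair of factors with index `j` contributes `(n - m) * (1 - c_j)` to
`2 ω G'(ω) / G(ω)`, where `c_j = (1 + ω^j) / (1 - ω^j)` (read as `0` when `ω^j = 1`). Finally
`∑_{j=1}^m c_j = 0`, because `j ↦ m - j` inverts `ω^j` and so changes the sign of `c_j`.
-/

open Polynomial Finset

namespace GaussBinom

section

variable {R : Type*} [CommRing R]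

noncomputable def reducedFactor (d t : ℕ) : R[X] :=
  if d ∣ t then ∑ i ∈ range (t / d), X ^ (d * i) else 1 - X ^ t

lemma one_sub_X_pow_eq_mul_reducedFactor (d t : ℕ) :
    (1 - X ^ t : R[X]) = (if d ∣ t then 1 - X ^ d else 1) * reducedFactor d t := by
  unfold reducedFactor
  split_ifs with h
  · obtain ⟨k, rfl⟩ := h
    rcases d.eq_zero_or_pos with rfl | hd
    · simp
    · simp_rw [Nat.mul_div_cancel_left k hd, pow_mul, mul_neg_geom_sum]
  · rw [one_mul]

lemma reducedFactor_mul {d : ℕ} (hd : 0 < d) (K : ℕ) :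
    (reducedFactor d (d * K) : R[X]) = ∑ i ∈ range K, X ^ (d * i) := by
  rw [reducedFactor, if_pos (dvd_mul_right d K), Nat.mul_div_cancel_left K hd]

lemma prod_one_sub_X_pow_add_eq (d a m : ℕ) (ha : d ∣ a) :
    ∏ j ∈ range m, (1 - X ^ (a + (j + 1)) : R[X]) =
      (∏ j ∈ range m, if d ∣ j + 1 then 1 - X ^ d else 1) *
        ∏ j ∈ range m, reducedFactor d (a + (j + 1)) := by
  rw [← prod_mul_distrib]
  refine prod_congr rfl fun j _ => ?_
  simp only [one_sub_X_pow_eq_mul_reducedFactor d (a + (j + 1)), Nat.dvd_add_right ha]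

lemma mul_eval_derivative_X_pow (ω : R) (k : ℕ) :
    ω * (X ^ k : R[X]).derivative.eval ω = k * ω ^ k := by
  rcases k with _ | k
  · simp
  · simp only [derivative_X_pow, eval_mul, eval_C, eval_pow, eval_X, Nat.add_sub_cancel]
    push_cast
    ring

lemma eval_sum_X_pow_mul {ω : R} {d : ℕ} (hω : ω ^ d = 1) (K : ℕ) :
    (∑ i ∈ range K, X ^ (d * i) : R[X]).eval ω = K := by
  simp [eval_finsetSum, pow_mul, hω]

lemma two_mul_mul_eval_derivative_sum_X_pow_mul {ω : R} {d : ℕ} (hω : ω ^ d = 1) (K : ℕ) :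
    2 * (ω * (∑ i ∈ range K, X ^ (d * i) : R[X]).derivative.eval ω) = d * K * (K - 1) := by
  rw [derivative_sum, eval_finsetSum, mul_sum]
  simp_rw [mul_eval_derivative_X_pow, pow_mul, hω, one_pow, mul_one, Nat.cast_mul, ← mul_sum]
  have hgauss := congrArg (Nat.cast : ℕ → R) (sum_range_id_mul_two K)
  rcases K with _ | K
  · simp
  · push_cast at hgauss ⊢
    linear_combination d * hgauss

end

lemma map_mul_prod_reducedFactor_eq {K : Type*} [Field K] {n m d : ℕ} {G : ℤ[X]}
    (hG : IsGaussBinom n m G) (hmn : m ≤ n) (hd : d ∣ n - m) :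
    G.map (algebraMap ℤ K) * ∏ j ∈ range m, reducedFactor d (j + 1) =
      ∏ j ∈ range m, reducedFactor d (n - m + (j + 1)) := by
  rw [IsGaussBinom, if_pos hmn] at hG
  have hK := congrArg (Polynomial.map (algebraMap ℤ K)) hG
  simp only [Polynomial.map_mul, Polynomial.map_prod, Polynomial.map_sub, Polynomial.map_one,
    Polynomial.map_pow, Polynomial.map_X] at hK
  have hcommon : ∏ j ∈ range m, (if d ∣ j + 1 then 1 - X ^ d else 1 : K[X]) ≠ 0 := by
    refine prod_ne_zero_iff.mpr fun j _ => ?_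
    split_ifs with h
    · have hd0 : d ≠ 0 := by rintro rfl; simp at h
      intro h0
      simpa [hd0] using congrArg (eval 0) h0
    · exact one_ne_zero
  have hsplit := prod_one_sub_X_pow_add_eq (R := K) d 0 m (dvd_zero d)
  simp only [zero_add] at hsplit
  rw [hsplit, prod_one_sub_X_pow_add_eq d (n - m) m hd] at hK
  exact mul_left_cancel₀ hcommon (by linear_combination hK)

lemma one_add_inv_div_one_sub_inv {K : Type*} [Field K] {z : K} (hz : z ≠ 0) :
    (1 + z⁻¹) / (1 - z⁻¹) = -((1 + z) / (1 - z)) := by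
  by_cases hz1 : z = 1
  · simp [hz1]
  · have : 1 - z ≠ 0 := sub_ne_zero.mpr (Ne.symm hz1)
    have : 1 - z⁻¹ ≠ 0 := sub_ne_zero.mpr (by simpa [eq_comm] using hz1)
    field_simp
    ring

lemma sum_range_one_add_pow_div_one_sub_pow {K : Type*} [Field K] [CharZero K] {ω : K} {m : ℕ}
    (hω : ω ^ m = 1) : ∑ t ∈ range m, (1 + ω ^ (t + 1)) / (1 - ω ^ (t + 1)) = 0 := by
  set f : ℕ → K := fun t => (1 + ω ^ t) / (1 - ω ^ t)
  rcases m.eq_zero_or_pos with rfl | hm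
  · simp
  have hω0 : ω ≠ 0 := by rintro rfl; simp [hm.ne'] at hω
  have hshift : ∑ t ∈ range m, f (t + 1) = ∑ t ∈ range m, f t := by
    have hperiod : f m = f 0 := by simp [f, hω]
    linear_combination (sum_range_succ' f m).symm + sum_range_succ f m + hperiod
  have hreflect : ∑ t ∈ range m, f (t + 1) = -∑ t ∈ range m, f t := by
    rw [← sum_range_reflect, ← sum_neg_distrib]
    refine sum_congr rfl fun t ht => ?_
    have htm : t < m := mem_range.mp ht
    have hinv : ω ^ (m - t) = (ω ^ t)⁻¹ :=
      eq_inv_of_mul_eq_one_left (by rw [pow_sub_mul_pow ω htm.le, hω])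
    rw [show m - 1 - t + 1 = m - t by omega]
    simp only [f, hinv, one_add_inv_div_one_sub_inv (pow_ne_zero t hω0)]
  have htwo : (2 : K) * ∑ t ∈ range m, f (t + 1) = 0 := by
    linear_combination hshift + hreflect
  exact (mul_eq_zero.mp htwo).resolve_left two_ne_zero

section LogDeriv

variable {𝕜 : Type*} [NontriviallyNormedField 𝕜]

lemma logDeriv_eval (p : 𝕜[X]) (ω : 𝕜) :
    logDeriv p.eval ω = p.derivative.eval ω / p.eval ω := by
  rw [logDeriv_apply, Polynomial.deriv]

lemma eval_derivative_eq_mul_sum_logDeriv {ι : Type*} {s : Finset ι} {G : 𝕜[X]}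
    {p q : ι → 𝕜[X]} {ω : 𝕜} (h : G * ∏ i ∈ s, p i = ∏ i ∈ s, q i)
    (hp : ∀ i ∈ s, (p i).eval ω ≠ 0) (hq : ∀ i ∈ s, (q i).eval ω ≠ 0) :
    G.derivative.eval ω =
      G.eval ω * ∑ i ∈ s, (logDeriv (q i).eval ω - logDeriv (p i).eval ω) := by
  have hfun : (fun x => G.eval x * ∏ i ∈ s, (p i).eval x) = fun x => ∏ i ∈ s, (q i).eval x :=
    funext fun x => by simpa [eval_prod] using congrArg (eval x) h
  have hPω : ∏ i ∈ s, (p i).eval ω ≠ 0 := prod_ne_zero_iff.mpr hp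
  have hGω : G.eval ω ≠ 0 := left_ne_zero_of_mul <| by
    rw [congrFun hfun ω]; exact prod_ne_zero_iff.mpr hq
  have hlog := congrArg (logDeriv · ω) hfun
  rw [logDeriv_mul ω hGω hPω G.differentiableAt
      (DifferentiableAt.fun_finsetProd fun i _ => (p i).differentiableAt),
    logDeriv_prod hp fun i _ => (p i).differentiableAt,
    logDeriv_prod hq fun i _ => (q i).differentiableAt] at hlog
  rw [sum_sub_distrib, ← hlog, add_sub_cancel_right, logDeriv_eval, mul_div_cancel₀ _ hGω]

lemma mul_logDeriv_one_sub_X_pow (ω : 𝕜) (t : ℕ) :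
    ω * logDeriv (1 - X ^ t : 𝕜[X]).eval ω = -(t * ω ^ t / (1 - ω ^ t)) := by
  rw [logDeriv_eval, ← mul_div_assoc, derivative_sub, derivative_one, zero_sub, eval_neg, mul_neg,
    mul_eval_derivative_X_pow]
  simp [neg_div]

section CharZero

variable [CharZero 𝕜] {ω : 𝕜} {d : ℕ}

lemma two_mul_logDeriv_sum_X_pow_mul (hω : ω ^ d = 1) {K : ℕ} (hK : K ≠ 0) :
    2 * ω * logDeriv (∑ i ∈ range K, X ^ (d * i) : 𝕜[X]).eval ω = d * (K - 1) := by
  have hK' : (K : 𝕜) ≠ 0 := Nat.cast_ne_zero.mpr hK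
  rw [logDeriv_eval, eval_sum_X_pow_mul hω]
  field_simp
  linear_combination two_mul_mul_eval_derivative_sum_X_pow_mul hω K

lemma eval_reducedFactor_ne_zero (hω : IsPrimitiveRoot ω d) {t : ℕ} (ht : 0 < t) :
    (reducedFactor d t : 𝕜[X]).eval ω ≠ 0 := by
  by_cases hdt : d ∣ t
  · obtain ⟨K, rfl⟩ := hdt
    rw [reducedFactor_mul (Nat.pos_of_mul_pos_right ht), eval_sum_X_pow_mul hω.pow_eq_one]
    exact Nat.cast_ne_zero.mpr (Nat.pos_of_mul_pos_left ht).ne'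
  · rw [reducedFactor, if_neg hdt, eval_sub, eval_one, eval_pow, eval_X, sub_ne_zero]
    exact fun h => hdt ((hω.pow_eq_one_iff_dvd t).mp h.symm)

lemma two_mul_sub_logDeriv_reducedFactor (hω : IsPrimitiveRoot ω d) {a t : ℕ} (ha : d ∣ a)
    (ht : 0 < t) :
    2 * ω * (logDeriv (reducedFactor d (a + t) : 𝕜[X]).eval ω -
        logDeriv (reducedFactor d t : 𝕜[X]).eval ω) =
      a * (1 - (1 + ω ^ t) / (1 - ω ^ t)) := by
  by_cases hdt : d ∣ t
  · obtain ⟨k, rfl⟩ := hdt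
    obtain ⟨b, rfl⟩ := ha
    have hd : 0 < d := Nat.pos_of_mul_pos_right ht
    have hk : 0 < k := Nat.pos_of_mul_pos_left ht
    rw [← mul_add, reducedFactor_mul hd, reducedFactor_mul hd, mul_sub,
      two_mul_logDeriv_sum_X_pow_mul hω.pow_eq_one (by omega),
      two_mul_logDeriv_sum_X_pow_mul hω.pow_eq_one hk.ne', pow_mul, hω.pow_eq_one, one_pow,
      sub_self, div_zero]
    push_cast
    ring
  · have hdat : ¬ d ∣ a + t := fun h => hdt ((Nat.dvd_add_right ha).mp h)
    have hωa : ω ^ a = 1 := (hω.pow_eq_one_iff_dvd a).mpr ha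
    have hωt : 1 - ω ^ t ≠ 0 :=
      sub_ne_zero.mpr fun h => hdt ((hω.pow_eq_one_iff_dvd t).mp h.symm)
    simp only [reducedFactor, if_neg hdt, if_neg hdat]
    rw [mul_sub, mul_assoc, mul_assoc, mul_logDeriv_one_sub_X_pow, mul_logDeriv_one_sub_X_pow,
      pow_add, hωa, one_mul]
    field_simp
    push_cast
    ring

end CharZero

end LogDeriv

end GaussBinom

open GaussBinom in
theorem stmt2_general (d m n : ℕ) (hdm : d ∣ m) (hmn : m ∣ n) (ω : ℂ) (hω : IsPrimitiveRoot ω d)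
    (G : Polynomial ℤ) (hG : IsGaussBinom n m G) :
    2 * ω * Polynomial.aeval ω (Polynomial.derivative G) =
      (m : ℂ) * ((n : ℂ) - (m : ℂ)) * Polynomial.aeval ω G := by
  by_cases hle : m ≤ n
  swap
  · rw [IsGaussBinom, if_neg hle] at hG
    simp [hG]
  have hd : d ∣ n - m := Nat.dvd_sub (hdm.trans hmn) hdm
  have hωm : ω ^ m = 1 := (hω.pow_eq_one_iff_dvd m).mpr hdm
  have hderiv := eval_derivative_eq_mul_sum_logDeriv (map_mul_prod_reducedFactor_eq hG hle hd)
    (fun j _ => eval_reducedFactor_ne_zero hω j.succ_pos)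
    (fun j _ => eval_reducedFactor_ne_zero hω (by omega))
  rw [← eval_map_algebraMap, ← eval_map_algebraMap, ← derivative_map, hderiv, mul_left_comm,
    mul_sum, sum_congr rfl fun j _ => two_mul_sub_logDeriv_reducedFactor hω hd j.succ_pos,
    ← mul_sum, sum_sub_distrib, sum_range_one_add_pow_div_one_sub_pow hωm]
  simp only [sum_const, card_range, nsmul_eq_mul, mul_one, sub_zero, Nat.cast_sub hle]
  ring

/-- Lemma 7.3: for positive integers `d ∣ m ∣ n` and `ω` a primitive `d`-th root of unity,
the Gaussian binomial `G = binom(n,m)_q` satisfies `2 ω G'(ω) = m (n - m) G(ω)`. -/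
theorem stmt2 (d m n : ℕ) (hd : 0 < d) (hm : 0 < m) (hn : 0 < n)
    (hdm : d ∣ m) (hmn : m ∣ n) (ω : ℂ) (hω : IsPrimitiveRoot ω d)
    (G : Polynomial ℤ) (hG : IsGaussBinom n m G) :
    2 * ω * Polynomial.aeval ω (Polynomial.derivative G) =
      (m : ℂ) * ((n : ℂ) - (m : ℂ)) * Polynomial.aeval ω G :=
  stmt2_general d m n hdm hmn ω hω G hG
end

section
/- Let a, b, d be positive integers and set n := a·b·d and m := b·d. Let ω ∈ ℂ be a primitive d-th root of unity and let E(q) := e_m(q, q², …, q^n) be the m-th elementary symmetric polynomial evaluated at the n-tuple (q, q², …, q^n). Then 2a·ω·E′(ω) = (−1)^{b+m} · n(n+1) · C(ab, b), where E′ is the derivative of the polynomial E and C denotes the ordinary binomial coefficient. -/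
open Finset Polynomial

/-!
Write `σ S = ∑ i ∈ S, (i + 1)`, so that `E = ∑ X ^ σ S` and `ω E'(ω) = ∑ σ S ω ^ σ S`.
Rotating `S ⊆ ℤ/n` by `k` changes `σ S` by `k m` modulo `n`, a multiple of `d`, so `ω ^ σ S`
is rotation invariant while `σ` averages to `m (n + 1) / 2` over the `n` rotations:
`2 ω E'(ω) = m (n + 1) E(ω)`. Finally `E(ω)` is the coefficient of `X ^ (n - m)` in
`∏ i < n, (X + ω ^ (i + 1)) = (X ^ d - (-1) ^ d) ^ (a b)`.
-/

theorem Function.Periodic.prod_range_mul_eq_pow {M : Type*} [CommMonoid M] {f : ℕ → M} {d : ℕ}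
    (hf : Function.Periodic f d) (u : ℕ) :
    ∏ i ∈ range (u * d), f i = (∏ i ∈ range d, f i) ^ u := by
  induction u with
  | zero => simp
  | succ u ih =>
    rw [Nat.succ_mul, prod_range_add, ih, pow_succ]
    congr 1
    refine prod_congr rfl fun i _ => ?_
    simpa [add_comm] using hf.nat_mul u i

theorem IsPrimitiveRoot.prod_range_X_add_C_pow_succ {R : Type*} [CommRing R] [IsDomain R]
    {ω : R} {d : ℕ} (hω : IsPrimitiveRoot ω d) (hd : 0 < d) :
    ∏ i ∈ range d, (X + C (ω ^ (i + 1))) = X ^ d - C ((-1) ^ d) := by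
  rw [X_pow_sub_C_eq_prod hω hd (α := -ω) (by rw [neg_pow, hω.pow_eq_one, mul_one])]
  refine prod_congr rfl fun i _ => ?_
  rw [pow_succ, mul_neg, C_neg, sub_neg_eq_add]

theorem Polynomial.coeff_X_pow_add_C_pow_mul {R : Type*} [CommSemiring R] (r : R) {d : ℕ}
    (hd : 0 < d) (u k : ℕ) :
    ((X ^ d + C r) ^ u).coeff (d * k) = r ^ (u - k) * u.choose k := by
  rw [← expand_X (R := R) d, ← expand_C d r, ← map_add, ← map_pow, coeff_expand hd,
    if_pos (dvd_mul_right d k), Nat.mul_div_cancel_left k hd, coeff_X_add_C_pow]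

theorem IsPrimitiveRoot.sum_powersetCard_pow_sum {R : Type*} [CommRing R] [IsDomain R]
    {ω : R} {d : ℕ} (hω : IsPrimitiveRoot ω d) (hd : 0 < d) {b u : ℕ} (hbu : b ≤ u) :
    ∑ S ∈ powersetCard (b * d) (range (u * d)), ω ^ (∑ i ∈ S, (i + 1)) =
      (-1) ^ (b + b * d) * u.choose b := by
  have hperiodic : Function.Periodic (fun i => X + C (ω ^ (i + 1))) d := fun i => by
    simp only [add_right_comm i d 1, pow_add _ (i + 1) d, hω.pow_eq_one, mul_one]
  have hmul : b * d ≤ u * d := Nat.mul_le_mul_right d hbu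
  have hcoeff := Finset.prod_X_add_C_coeff (range (u * d)) (fun i => ω ^ (i + 1))
    (k := d * (u - b)) (by rw [card_range, mul_comm d, Nat.sub_mul]; omega)
  rw [card_range, hperiodic.prod_range_mul_eq_pow, hω.prod_range_X_add_C_pow_succ hd,
    sub_eq_add_neg, ← C_neg, coeff_X_pow_add_C_pow_mul _ hd, Nat.sub_sub_self hbu,
    Nat.choose_symm hbu, mul_comm d, Nat.sub_mul, Nat.sub_sub_self hmul] at hcoeff
  simp only [prod_pow_eq_pow_sum] at hcoeff
  rw [← hcoeff, neg_pow, ← pow_mul, pow_add, mul_comm d]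

theorem Finset.sum_powersetCard_univ_map_equiv {α M : Type*} [Fintype α] [AddCommMonoid M]
    (e : α ≃ α) (m : ℕ) (h : Finset α → M) :
    ∑ S ∈ powersetCard m univ, h (S.map e.toEmbedding) = ∑ S ∈ powersetCard m univ, h S := by
  conv_rhs => rw [← map_univ_equiv e, powersetCard_map, sum_map]
  rfl

theorem Finset.sum_powersetCard_range_eq_sum_powersetCard_univ {M : Type*} [AddCommMonoid M]
    (n m : ℕ) (h : Finset ℕ → M) :
    ∑ S ∈ powersetCard m (range n), h S =
      ∑ T ∈ powersetCard m (univ : Finset (Fin n)), h (T.map Fin.valEmbedding) := by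
  rw [← Nat.Iio_eq_range, ← Fin.map_valEmbedding_univ, powersetCard_map, sum_map]
  rfl

theorem card_mul_sum_powersetCard_sum_mul_of_invariant {G R : Type*} [AddGroup G] [Fintype G]
    [CommSemiring R] (m : ℕ) (g : G → R) (f : Finset G → R)
    (hf : ∀ k S, S.card = m → f (S.map (Equiv.addRight k).toEmbedding) = f S) :
    Fintype.card G * ∑ S ∈ powersetCard m univ, (∑ i ∈ S, g i) * f S =
      m * (∑ i, g i) * ∑ S ∈ powersetCard m univ, f S := by
  calc (Fintype.card G : R) * ∑ S ∈ powersetCard m univ, (∑ i ∈ S, g i) * f S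
      = ∑ k : G, ∑ S ∈ powersetCard m univ, (∑ i ∈ S.map (Equiv.addRight k).toEmbedding, g i) *
          f (S.map (Equiv.addRight k).toEmbedding) := by
        rw [sum_congr rfl fun k _ => sum_powersetCard_univ_map_equiv (Equiv.addRight k) m
          fun S => (∑ i ∈ S, g i) * f S, sum_const, card_univ, nsmul_eq_mul]
    _ = ∑ k : G, ∑ S ∈ powersetCard m univ, (∑ i ∈ S, g (i + k)) * f S := by
        refine sum_congr rfl fun k _ => sum_congr rfl fun S hS => ?_
        rw [sum_map, hf k S (mem_powersetCard.1 hS).2]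
        rfl
    _ = ∑ S ∈ powersetCard m univ, (∑ i ∈ S, ∑ k, g (i + k)) * f S := by
        rw [sum_comm]
        refine sum_congr rfl fun S _ => ?_
        rw [← sum_mul, sum_comm]
    _ = ∑ S ∈ powersetCard m univ, (m * ∑ i, g i) * f S := by
        refine sum_congr rfl fun S hS => ?_
        rw [sum_congr rfl fun i _ => Fintype.sum_equiv (Equiv.addLeft i) (fun k => g (i + k)) g
            fun _ => rfl,
          sum_const, (mem_powersetCard.1 hS).2, nsmul_eq_mul]
    _ = _ := by rw [← mul_sum]

theorem two_mul_sum_powersetCard_mul_pow_sum {K : Type*} [Field K] [CharZero K] {ω : K}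
    {m n : ℕ} (hn : 0 < n) (hωn : ω ^ n = 1) (hωm : ω ^ m = 1) :
    2 * ∑ S ∈ powersetCard m (range n), ((∑ i ∈ S, (i + 1) : ℕ) : K) * ω ^ (∑ i ∈ S, (i + 1)) =
      m * (n + 1) * ∑ S ∈ powersetCard m (range n), ω ^ (∑ i ∈ S, (i + 1)) := by
  have : NeZero n := ⟨hn.ne'⟩
  have hshift (k : Fin n) (S : Finset (Fin n)) (hS : S.card = m) :
      ω ^ ∑ i ∈ S.map (Equiv.addRight k).toEmbedding, ((i : ℕ) + 1) =
        ω ^ ∑ i ∈ S, ((i : ℕ) + 1) := by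
    have hval (i : Fin n) : ω ^ ((i + k : Fin n) + 1 : ℕ) = ω ^ ((i : ℕ) + 1) * ω ^ (k : ℕ) := by
      rw [Fin.val_add, pow_succ, ← pow_eq_pow_mod _ hωn, pow_add]; ring
    simp only [sum_map, ← prod_pow_eq_pow_sum, Equiv.coe_toEmbedding, Equiv.coe_addRight, hval,
      prod_mul_distrib, prod_const, hS]
    rw [pow_right_comm, hωm, one_pow, mul_one]
  have hgauss : 2 * ∑ i : Fin n, ((i : ℕ) + 1 : K) = n * (n + 1) := by
    have h := sum_range_id_mul_two (n + 1)
    rw [sum_range_succ', add_tsub_cancel_right] at h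
    rw [Fin.sum_univ_eq_sum_range (fun i => (i : K) + 1)]
    exact_mod_cast (by linarith : 2 * ∑ i ∈ range n, (i + 1) = n * (n + 1))
  have key := card_mul_sum_powersetCard_sum_mul_of_invariant m
    (fun i : Fin n => ((i : ℕ) + 1 : K)) (fun S => ω ^ ∑ i ∈ S, ((i : ℕ) + 1)) hshift
  simp only [sum_powersetCard_range_eq_sum_powersetCard_univ, sum_map, Fin.valEmbedding_apply]
  push_cast at key ⊢
  rw [Fintype.card_fin] at key
  apply mul_left_cancel₀ (Nat.cast_ne_zero.2 hn.ne' : (n : K) ≠ 0)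
  linear_combination 2 * key +
    (m : K) * (∑ S ∈ powersetCard m (univ : Finset (Fin n)), ω ^ ∑ i ∈ S, ((i : ℕ) + 1)) * hgauss

theorem mul_aeval_derivative_X_pow {R A : Type*} [CommSemiring R] [CommSemiring A] [Algebra R A]
    (x : A) (k : ℕ) : x * aeval x (derivative (X ^ k : R[X])) = k * x ^ k := by
  cases k with
  | zero => simp
  | succ k => rw [derivative_X_pow_succ]; simp; ring

/-- The key derivative evaluation from the proof of Lemma 7.3: for positive integers
`a, b, d`, with `n = abd` and `m = bd`, let `E(q) = e_m(q, q², …, q^n)` be the `m`-th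
elementary symmetric polynomial evaluated at `(q, q², …, q^n)`. If `ω` is a primitive
`d`-th root of unity, then `2 a ω E'(ω) = (-1)^{b+m} n (n+1) C(ab, b)`. -/
theorem stmt3 (a b d : ℕ) (ha : 0 < a) (hb : 0 < b) (hd : 0 < d)
    (ω : ℂ) (hω : IsPrimitiveRoot ω d)
    (E : Polynomial ℤ)
    (hE : E = ∑ S ∈ Finset.powersetCard (b * d) (Finset.range (a * b * d)),
        ∏ i ∈ S, Polynomial.X ^ (i + 1)) :
    2 * (a : ℂ) * ω * Polynomial.aeval ω (Polynomial.derivative E) =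
      (-1 : ℂ) ^ (b + b * d) * ((a : ℂ) * b * d) * ((a : ℂ) * b * d + 1) *
        ((a * b).choose b : ℂ) := by
  have hweighted : ω * aeval ω (derivative E) = ∑ S ∈ powersetCard (b * d) (range (a * b * d)),
      ((∑ i ∈ S, (i + 1) : ℕ) : ℂ) * ω ^ (∑ i ∈ S, (i + 1)) := by
    simp only [hE, prod_pow_eq_pow_sum, map_sum, mul_sum, mul_aeval_derivative_X_pow]
  have haverage := two_mul_sum_powersetCard_mul_pow_sum (m := b * d) (n := a * b * d)
    (Nat.mul_pos (Nat.mul_pos ha hb) hd) ((hω.pow_eq_one_iff_dvd _).2 (dvd_mul_left d _))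
    ((hω.pow_eq_one_iff_dvd _).2 (dvd_mul_left d _))
  have hvalue := hω.sum_powersetCard_pow_sum hd (Nat.le_mul_of_pos_left b ha)
  calc 2 * (a : ℂ) * ω * aeval ω (derivative E) = a * (2 * (ω * aeval ω (derivative E))) := by
        ring
    _ = _ := by
        rw [hweighted, haverage, hvalue]
        push_cast
        ring
end

section
/- Let d1, d2 ≥ 1 be integers. In the field ℚ(q) of rational functions, define Ω(q) := (q − 2 + q^{−1}) · (∑_{k ∣ gcd(d1, d2)} μ(k) · k² · (q^{d1·d2/k} − 2 + q^{−d1·d2/k})) / ((q^{d1} − 2 + q^{−d1}) · (q^{d2} − 2 + q^{−d2})). Then q^{d1·d2 − d1 − d2 + 1} · Ω(q) is a polynomial in q with integer coefficients. -/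
open scoped BigOperators

/-- `q^n - 2 + q^{-n}` in the field `ℚ(q)` of rational functions (the square of the
balanced `q`-integer `q^{n/2} - q^{-n/2}`). -/
noncomputable def sq2 (n : ℤ) : RatFunc ℚ := RatFunc.X ^ n - 2 + RatFunc.X ^ (-n)

/-!
Clearing denominators, `q^{d1 d2 - d1 - d2 + 1} Ω(q)` equals
`(q - 1)² S_g(q^L) / ((q^{d1} - 1)(q^{d2} - 1))²`, where `g = gcd(d1, d2)`, `L = lcm(d1, d2)` and
`S_g(y) = ∑_{k ∣ g} μ(k) k² y^{(g/k)(k-1)} (y^{g/k} - 1)²`.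
Comparing cyclotomic factors, `(q^{d1} - 1)(q^{d2} - 1)` divides `(q^g - 1)(q^L - 1)`.
For `g = 1` we have `S_1(y) = (y - 1)²` and we are done. For `g ≥ 2`, every summand of `S_g` is
congruent to `g²(y - 1)² + g²(g - 1)(y - 1)³` modulo `(y - 1)⁴`, independently of `k`, so
`∑_{k ∣ g} μ(k) = 0` gives `(y - 1)⁴ ∣ S_g(y)`, and `(q^g - 1)²(q^L - 1)²` divides `(q^L - 1)⁴`.
-/

open Polynomial ArithmeticFunction
open scoped ArithmeticFunction.Moebius

theorem Nat.divisors_inter_divisors {a b : ℕ} (ha : a ≠ 0) (hb : b ≠ 0) :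
    a.divisors ∩ b.divisors = (a.gcd b).divisors := by
  ext m
  simp [Nat.dvd_gcd_iff, ha, hb]

section CommRing

variable {R : Type*} [CommRing R]

theorem exists_pow_eq_expansion_at_one (x : R) (n : ℕ) :
    ∃ c a : R, x ^ n = 1 + n * (x - 1) + c * (x - 1) ^ 2 + a * (x - 1) ^ 3 ∧
      2 * c = n * (n - 1) := by
  induction n with
  | zero => exact ⟨0, 0, by simp, by simp⟩
  | succ n ih =>
    obtain ⟨c, a, hpow, hc⟩ := ih
    refine ⟨c + n, a + c + a * (x - 1), ?_, ?_⟩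
    · push_cast
      linear_combination x * hpow
    · push_cast
      linear_combination hc

theorem sub_one_pow_four_dvd (z : R) (k : ℕ) :
    (z - 1) ^ 4 ∣ k ^ 2 * z ^ (k - 1) * (z - 1) ^ 2 - (z ^ k - 1) ^ 2 := by
  cases k with
  | zero => simp
  | succ m =>
    obtain ⟨c, a, hk, hc⟩ := exists_pow_eq_expansion_at_one z (m + 1)
    obtain ⟨c', a', hm, -⟩ := exists_pow_eq_expansion_at_one z m
    refine ⟨(m + 1) ^ 2 * (c' + a' * (z - 1)) - (c + a * (z - 1)) ^ 2 - 2 * (m + 1) * a, ?_⟩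
    rw [Nat.add_sub_cancel]
    push_cast at hk hc ⊢
    linear_combination (m + 1 : R) ^ 2 * (z - 1) ^ 2 * hm
      - (z ^ (m + 1) - 1 + (m + 1) * (z - 1) + c * (z - 1) ^ 2 + a * (z - 1) ^ 3) * hk
      - (m + 1 : R) * (z - 1) ^ 3 * hc

theorem sub_one_pow_four_dvd_of_pow (x : R) (n k : ℕ) :
    (x - 1) ^ 4 ∣ k ^ 2 * x ^ (n * (k - 1)) * (x ^ n - 1) ^ 2 - (x ^ (n * k) - 1) ^ 2 := by
  simpa only [pow_mul] using
    (pow_dvd_pow_of_dvd (sub_one_dvd_pow_sub_one x n) 4).trans (sub_one_pow_four_dvd (x ^ n) k)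

theorem sum_divisors_moebius_eq_zero {g : ℕ} (hg : g ≠ 1) :
    ∑ k ∈ g.divisors, (μ k : R) = 0 := by
  have h := coe_mul_zeta_apply (f := (μ : ArithmeticFunction R)) (x := g)
  rw [coe_moebius_mul_coe_zeta, one_apply_ne hg] at h
  simpa using h.symm

def moebiusSum (g : ℕ) (y : R) : R :=
  ∑ k ∈ g.divisors, (μ k : R) * k ^ 2 * y ^ (g / k * (k - 1)) * (y ^ (g / k) - 1) ^ 2

theorem moebiusSum_one (y : R) : moebiusSum 1 y = (y - 1) ^ 2 := by
  simp [moebiusSum]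

theorem sub_one_pow_four_dvd_moebiusSum {g : ℕ} (hg : g ≠ 1) (y : R) :
    (y - 1) ^ 4 ∣ moebiusSum g y := by
  have hsum : moebiusSum g y = ∑ k ∈ g.divisors, (μ k : R) *
      (k ^ 2 * y ^ (g / k * (k - 1)) * (y ^ (g / k) - 1) ^ 2 - (y ^ g - 1) ^ 2) := by
    simp only [mul_sub, Finset.sum_sub_distrib, ← Finset.sum_mul,
      sum_divisors_moebius_eq_zero hg, zero_mul, sub_zero, moebiusSum, mul_assoc]
  rw [hsum]
  refine Finset.dvd_sum fun k hk => Dvd.dvd.mul_left ?_ _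
  simpa only [Nat.div_mul_cancel (Nat.dvd_of_mem_divisors hk)] using
    sub_one_pow_four_dvd_of_pow y (g / k) k

theorem map_moebiusSum {S F : Type*} [CommRing S] [FunLike F R S] [RingHomClass F R S] (f : F)
    (g : ℕ) (y : R) :
    f (moebiusSum g y) = moebiusSum g (f y) := by
  simp [moebiusSum]

theorem pow_sub_one_mul_sq_dvd_moebiusSum (x : R) {g L : ℕ} (hgL : g ∣ L) :
    ((x ^ g - 1) * (x ^ L - 1)) ^ 2 ∣ (x - 1) ^ 2 * moebiusSum g (x ^ L) := by
  obtain ⟨m, rfl⟩ := hgL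
  obtain rfl | hg := eq_or_ne g 1
  · rw [moebiusSum_one, pow_one, one_mul, mul_pow]
  calc ((x ^ g - 1) * (x ^ (g * m) - 1)) ^ 2
      ∣ (x ^ (g * m) - 1) ^ 4 := by
        rw [show (x ^ (g * m) - 1) ^ 4 = ((x ^ (g * m) - 1) * (x ^ (g * m) - 1)) ^ 2 by ring]
        exact pow_dvd_pow_of_dvd (mul_dvd_mul_right (pow_one_sub_dvd_pow_mul_sub_one x g m) _) 2
    _ ∣ moebiusSum g (x ^ (g * m)) := sub_one_pow_four_dvd_moebiusSum hg _
    _ ∣ (x - 1) ^ 2 * moebiusSum g (x ^ (g * m)) := dvd_mul_left _ _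

theorem X_pow_sub_one_mul_dvd_gcd_lcm {a b : ℕ} (ha : 0 < a) (hb : 0 < b) :
    ((X : R[X]) ^ a - 1) * (X ^ b - 1) ∣ (X ^ a.gcd b - 1) * (X ^ a.lcm b - 1) := by
  rw [← prod_cyclotomic_eq_X_pow_sub_one ha, ← prod_cyclotomic_eq_X_pow_sub_one hb,
    ← prod_cyclotomic_eq_X_pow_sub_one (Nat.gcd_pos_of_pos_left b ha),
    ← prod_cyclotomic_eq_X_pow_sub_one (Nat.lcm_pos ha hb), ← Finset.prod_union_inter,
    Nat.divisors_inter_divisors ha.ne' hb.ne', mul_comm]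
  refine mul_dvd_mul dvd_rfl (Finset.prod_dvd_prod_of_subset _ _ _ ?_)
  have hlcm : a.lcm b ≠ 0 := (Nat.lcm_pos ha hb).ne'
  exact Finset.union_subset (Nat.divisors_subset_of_dvd hlcm (Nat.dvd_lcm_left a b))
    (Nat.divisors_subset_of_dvd hlcm (Nat.dvd_lcm_right a b))

end CommRing

theorem RatFunc.X_pow_sub_one_ne_zero {K : Type*} [Field K] {n : ℕ} (hn : 0 < n) :
    (RatFunc.X : RatFunc K) ^ n - 1 ≠ 0 := by
  rw [← RatFunc.algebraMap_X, ← map_pow, ← map_one (algebraMap K[X] _), ← map_sub, ← C_1]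
  exact (map_ne_zero_iff _ (RatFunc.algebraMap_injective K)).mpr (X_pow_sub_C_ne_zero hn 1)

theorem sq2_natCast (n : ℕ) :
    sq2 n = ((RatFunc.X : RatFunc ℚ) ^ n - 1) ^ 2 / RatFunc.X ^ n := by
  have hX : (RatFunc.X : RatFunc ℚ) ^ n ≠ 0 := pow_ne_zero _ RatFunc.X_ne_zero
  rw [sq2, zpow_neg, zpow_natCast, eq_div_iff hX]
  linear_combination inv_mul_cancel₀ hX

theorem X_pow_mul_sq2 (n : ℕ) {k : ℕ} (hk : k ≠ 0) :
    RatFunc.X ^ (n * k) * sq2 n = RatFunc.X ^ (n * (k - 1)) * (RatFunc.X ^ n - 1) ^ 2 := by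
  obtain ⟨m, rfl⟩ := Nat.exists_eq_succ_of_ne_zero hk
  have hX : (RatFunc.X : RatFunc ℚ) ≠ 0 := RatFunc.X_ne_zero
  rw [sq2_natCast, Nat.succ_sub_one, Nat.mul_succ, pow_add]
  field_simp

theorem X_pow_mul_sum_sq2 (d1 d2 : ℕ) :
    RatFunc.X ^ (d1 * d2) * ∑ k ∈ (d1.gcd d2).divisors,
        ((μ k : ℤ) : RatFunc ℚ) * (k : RatFunc ℚ) ^ 2 * sq2 ((d1 * d2 / k : ℕ) : ℤ)
      = moebiusSum (d1.gcd d2) (RatFunc.X ^ d1.lcm d2) := by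
  rw [moebiusSum, Finset.mul_sum]
  refine Finset.sum_congr rfl fun k hk => ?_
  have hkg : d1.gcd d2 / k * k = d1.gcd d2 := Nat.div_mul_cancel (Nat.dvd_of_mem_divisors hk)
  have hN : d1 * d2 = d1.lcm d2 * (d1.gcd d2 / k) * k := by
    rw [mul_assoc, hkg, Nat.mul_comm (d1.lcm d2), Nat.gcd_mul_lcm]
  have hNk : d1 * d2 / k = d1.lcm d2 * (d1.gcd d2 / k) := by
    rw [hN, Nat.mul_div_cancel _ (Nat.pos_of_mem_divisors hk)]
  rw [hNk, hN, mul_left_comm, X_pow_mul_sq2 _ (Nat.pos_of_mem_divisors hk).ne', ← pow_mul,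
    ← pow_mul, mul_assoc]
  ring

/-- Open BPS integrality (Theorem 7.1, case `l = 4`) for `F₀(0,0,0,0)`: for `d1, d2 ≥ 1`,
with `Ω(q) = (q - 2 + q⁻¹) ∑_{k ∣ gcd(d1,d2)} μ(k) k² (q^{d1d2/k} - 2 + q^{-d1d2/k})
/ ((q^{d1} - 2 + q^{-d1})(q^{d2} - 2 + q^{-d2}))`, the rational function
`q^{d1d2 - d1 - d2 + 1} Ω(q)` is a polynomial in `q` with integer coefficients. -/
theorem stmt6 (d1 d2 : ℕ) (h1 : 1 ≤ d1) (h2 : 1 ≤ d2) :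
    ∃ P : Polynomial ℤ,
      RatFunc.X ^ ((d1 : ℤ) * d2 - d1 - d2 + 1) *
        (sq2 1 *
          (∑ k ∈ (Nat.gcd d1 d2).divisors,
            ((ArithmeticFunction.moebius k : ℤ) : RatFunc ℚ) * (k : RatFunc ℚ) ^ 2 *
              sq2 ((d1 * d2 / k : ℕ) : ℤ)) /
          (sq2 (d1 : ℤ) * sq2 (d2 : ℤ)))
      = Polynomial.aeval RatFunc.X P := by
  obtain ⟨P, hP⟩ := (pow_dvd_pow_of_dvd (X_pow_sub_one_mul_dvd_gcd_lcm (R := ℤ) h1 h2) 2).trans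
    (pow_sub_one_mul_sq_dvd_moebiusSum X ((Nat.gcd_dvd_left d1 d2).trans (Nat.dvd_lcm_left d1 d2)))
  refine ⟨P, ?_⟩
  have hPX := congrArg (aeval (RatFunc.X : RatFunc ℚ)) hP
  simp only [map_mul, map_pow, map_sub, map_one, map_moebiusSum, aeval_X] at hPX
  have hsum := X_pow_mul_sum_sq2 d1 d2
  have hX : (RatFunc.X : RatFunc ℚ) ≠ 0 := RatFunc.X_ne_zero
  rw [show ((d1 : ℤ) * d2 - d1 - d2 + 1) = ((d1 * d2 + 1 : ℕ) : ℤ) - d1 - d2 by push_cast; ring,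
    zpow_sub₀ hX, zpow_sub₀ hX, zpow_natCast, zpow_natCast, zpow_natCast,
    show sq2 1 = sq2 ((1 : ℕ) : ℤ) by simp, sq2_natCast, sq2_natCast, sq2_natCast]
  rw [eq_div_of_mul_eq (pow_ne_zero _ hX) ((mul_comm _ _).trans hsum)]
  have hd1 := RatFunc.X_pow_sub_one_ne_zero (K := ℚ) h1
  have hd2 := RatFunc.X_pow_sub_one_ne_zero (K := ℚ) h2
  field_simp
  linear_combination RatFunc.X ^ (d1 * d2 + 1) * hPX
end

section
/- For every integer d ≥ 1, d² divides ∑_{k ∣ d} μ(k) · (−1)^{d/k} · C(2d/k − 1, d/k − 1). -/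
/-!
Write `F n = (-1)^n C(2n-1, n-1)`. At a prime `p` with `p^a ∥ d`, the sum `∑_{k∣d} μ(k) F(d/k)`
collapses to `∑_{k ∣ d/p^a} μ(k) (F(d/k) - F(d/(pk)))`, so `d^r` divides it as soon as
`F(pt) ≡ F(t) mod p^{r(b+1)}` whenever `p^b ∣ t`.

This congruence holds with `r = 2`. Let `I` be the integers in `[1, pt]` prime to `p`. Removing
the multiples of `p` from `(pt)!` and from `(2pt)!/(pt)!` gives
`C(2pt, pt) ∏_I i = C(2t, t) ∏_I (pt+i)`, while pairing `i` with `pt - i` gives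
`∏_I (pt+i) · ∏_I i ≡ (-1)^|I| (∏_I i)^2 mod (pt)^2`.
As `∏_I i` is prime to `p`, `C(2pt-1, pt-1) ≡ (-1)^|I| C(2t-1, t-1) mod p^{2(b+1)}`.
-/

open Finset ArithmeticFunction
open scoped Nat ArithmeticFunction.Moebius

theorem sum_divisors_mul_of_coprime {M : Type*} [AddCommMonoid M] {m n : ℕ} (hmn : m.Coprime n)
    (F : ℕ → M) :
    ∑ k ∈ (m * n).divisors, F k = ∑ i ∈ m.divisors, ∑ j ∈ n.divisors, F (i * j) := by
  rw [hmn.divisors_mul, sum_map, ← sum_product' (f := fun i j => F (i * j))]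
  exact sum_attach _ fun x : ℕ × ℕ => F (x.1 * x.2)

theorem sum_divisors_prime_pow_moebius_mul {p a : ℕ} (hp : p.Prime) (ha : a ≠ 0) (g : ℕ → ℤ) :
    ∑ e ∈ (p ^ a).divisors, μ e * g e = g 1 - g p := by
  obtain ⟨b, rfl⟩ := Nat.exists_eq_add_one_of_ne_zero ha
  have hsq : ∀ i, μ (p ^ (i + 2)) = 0 := fun i =>
    moebius_eq_zero_of_not_squarefree fun h => by
      have := (Nat.squarefree_pow_iff hp.ne_one (by omega)).mp h
      omega
  rw [Nat.sum_divisors_prime_pow hp, sum_range_succ', sum_range_succ']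
  simp [hsq, moebius_apply_prime hp, sub_eq_neg_add]

theorem prime_pow_dvd_sum_moebius_mul (f : ℕ → ℤ) (r : ℕ)
    (hf : ∀ p b t : ℕ, p.Prime → p ^ b ∣ t → (p : ℤ) ^ (r * (b + 1)) ∣ f (p * t) - f t)
    {d p : ℕ} (hd : d ≠ 0) (hp : p.Prime) :
    (p : ℤ) ^ (r * d.factorization p) ∣ ∑ k ∈ d.divisors, μ k * f (d / k) := by
  set a := d.factorization p
  set m := ordCompl[p] d
  rcases eq_or_ne a 0 with ha | ha
  · simp [ha]
  obtain ⟨b, hab⟩ := Nat.exists_eq_add_one_of_ne_zero ha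
  have hmp : m.Coprime (p ^ a) := ((Nat.coprime_ordCompl hp hd).pow_left a).symm
  have hdm : d = m * p ^ a := by rw [mul_comm]; exact (Nat.ordProj_mul_ordCompl_eq_self d p).symm
  have hsplit : ∀ k ∈ m.divisors, ∑ e ∈ (p ^ a).divisors, μ (k * e) * f (d / (k * e)) =
      μ k * (f (p * (m / k * p ^ b)) - f (m / k * p ^ b)) := by
    intro k hk
    have hk : k ∣ m := Nat.dvd_of_mem_divisors hk
    calc ∑ e ∈ (p ^ a).divisors, μ (k * e) * f (d / (k * e))
        = μ k * ∑ e ∈ (p ^ a).divisors, μ e * f (m / k * (p ^ a / e)) := by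
          rw [mul_sum]
          refine sum_congr rfl fun e he => ?_
          have he : e ∣ p ^ a := Nat.dvd_of_mem_divisors he
          rw [isMultiplicative_moebius.map_mul_of_coprime
            (hmp.coprime_dvd_left hk |>.coprime_dvd_right he), hdm, Nat.mul_div_mul_comm hk he]
          ring
      _ = _ := by
          rw [sum_divisors_prime_pow_moebius_mul hp ha, Nat.div_one, hab, pow_succ,
            Nat.mul_div_cancel _ hp.pos]
          ring_nf
  rw [hdm, sum_divisors_mul_of_coprime hmp, ← hdm]
  refine dvd_sum fun k hk => ?_
  rw [hsplit k hk, hab]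
  exact (hf p b (m / k * p ^ b) hp (dvd_mul_left _ _)).mul_left _

theorem pow_dvd_sum_moebius_mul (f : ℕ → ℤ) (r : ℕ)
    (hf : ∀ p b t : ℕ, p.Prime → p ^ b ∣ t → (p : ℤ) ^ (r * (b + 1)) ∣ f (p * t) - f t)
    {d : ℕ} (hd : d ≠ 0) :
    (d : ℤ) ^ r ∣ ∑ k ∈ d.divisors, μ k * f (d / k) := by
  rw [← Nat.cast_pow, Int.natCast_dvd, Nat.dvd_iff_prime_pow_dvd_dvd]
  intro p k hp hpk
  have hk : k ≤ r * d.factorization p := by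
    rwa [hp.pow_dvd_iff_le_factorization (pow_ne_zero r hd), Nat.factorization_pow,
      Finsupp.smul_apply, smul_eq_mul] at hpk
  rw [← Int.natCast_dvd, Nat.cast_pow]
  exact (pow_dvd_pow _ hk).trans (prime_pow_dvd_sum_moebius_mul f r hf hd hp)

theorem factorial_eq_prod_Icc (n : ℕ) : n ! = ∏ i ∈ Icc 1 n, i := by
  rw [← prod_Ico_id_eq_factorial, Ico_add_one_right_eq_Icc]

theorem centralBinom_mul_factorial (n : ℕ) : n.centralBinom * n ! = ∏ i ∈ Icc 1 n, (n + i) := by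
  have h := Nat.choose_mul_factorial_mul_factorial (show n ≤ 2 * n by omega)
  rw [← Nat.centralBinom_eq_two_mul_choose, show 2 * n - n = n by omega, two_mul,
    ← Nat.factorial_mul_ascFactorial, mul_comm] at h
  rw [Nat.eq_of_mul_eq_mul_left n.factorial_pos h, Nat.ascFactorial_eq_prod_range,
    ← Ico_add_one_right_eq_Icc, prod_Ico_eq_prod_range, Nat.add_sub_cancel]
  simp_rw [add_assoc]

theorem centralBinom_eq_two_mul_choose_pred {n : ℕ} (hn : n ≠ 0) :
    n.centralBinom = 2 * (2 * n - 1).choose (n - 1) := by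
  obtain ⟨m, rfl⟩ := Nat.exists_eq_add_one_of_ne_zero hn
  rw [Nat.centralBinom_eq_two_mul_choose, show 2 * (m + 1) = 2 * m + 1 + 1 by ring,
    Nat.choose_succ_succ, Nat.choose_symm_half]
  simp [two_mul]

theorem filter_dvd_Icc_mul_eq_image (p t : ℕ) (hp : 0 < p) :
    {i ∈ Icc 1 (p * t) | p ∣ i} = (Icc 1 t).image (p * ·) := by
  ext i
  simp only [mem_filter, mem_Icc, mem_image]
  constructor
  · rintro ⟨⟨h1, h2⟩, j, rfl⟩
    exact ⟨j, ⟨Nat.pos_of_mul_pos_left h1, Nat.le_of_mul_le_mul_left h2 hp⟩, rfl⟩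
  · rintro ⟨j, ⟨hj1, hj2⟩, rfl⟩
    exact ⟨⟨Nat.mul_pos hp hj1, Nat.mul_le_mul_left p hj2⟩, dvd_mul_right p j⟩

theorem prod_Icc_mul_eq_prod_mul_prod_filter {M : Type*} [CommMonoid M] (p t : ℕ) (hp : 0 < p)
    (g : ℕ → M) :
    ∏ i ∈ Icc 1 (p * t), g i =
      (∏ j ∈ Icc 1 t, g (p * j)) * ∏ i ∈ {i ∈ Icc 1 (p * t) | ¬p ∣ i}, g i := by
  rw [← prod_filter_mul_prod_filter_not _ (p ∣ ·), filter_dvd_Icc_mul_eq_image p t hp,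
    prod_image fun _ _ _ _ h => Nat.eq_of_mul_eq_mul_left hp h]

theorem card_filter_not_dvd_Icc_mul_add (p t : ℕ) (hp : 0 < p) :
    #{i ∈ Icc 1 (p * t) | ¬p ∣ i} + t = p * t := by
  have h := card_filter_add_card_filter_not (s := Icc 1 (p * t)) (p ∣ ·)
  rw [filter_dvd_Icc_mul_eq_image p t hp, card_image_of_injective _ (mul_right_injective₀ hp.ne'),
    Nat.card_Icc, Nat.card_Icc] at h
  omega

theorem centralBinom_mul_prod_filter_not_dvd (p t : ℕ) (hp : 0 < p) :
    (p * t).centralBinom * ∏ i ∈ {i ∈ Icc 1 (p * t) | ¬p ∣ i}, i =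
      t.centralBinom * ∏ i ∈ {i ∈ Icc 1 (p * t) | ¬p ∣ i}, (p * t + i) := by
  have hfac : (p * t)! = p ^ t * t ! * ∏ i ∈ {i ∈ Icc 1 (p * t) | ¬p ∣ i}, i := by
    rw [factorial_eq_prod_Icc, prod_Icc_mul_eq_prod_mul_prod_filter p t hp, prod_mul_distrib,
      prod_const, Nat.card_Icc, factorial_eq_prod_Icc, Nat.add_sub_cancel]
  refine Nat.eq_of_mul_eq_mul_left (by positivity : 0 < p ^ t * t !) ?_
  calc p ^ t * t ! * ((p * t).centralBinom * ∏ i ∈ {i ∈ Icc 1 (p * t) | ¬p ∣ i}, i)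
      = (p * t).centralBinom * (p * t)! := by rw [hfac]; ring
    _ = p ^ t * (∏ j ∈ Icc 1 t, (t + j)) * ∏ i ∈ {i ∈ Icc 1 (p * t) | ¬p ∣ i}, (p * t + i) := by
      simp_rw [centralBinom_mul_factorial, prod_Icc_mul_eq_prod_mul_prod_filter p t hp, ← mul_add,
        prod_mul_distrib, prod_const, Nat.card_Icc, Nat.add_sub_cancel]
    _ = p ^ t * t ! * (t.centralBinom * ∏ i ∈ {i ∈ Icc 1 (p * t) | ¬p ∣ i}, (p * t + i)) := by
      rw [← centralBinom_mul_factorial]; ring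

theorem prod_add_mul_prod_sub_modEq {ι : Type*} (s : Finset ι) (c : ℤ) (g : ι → ℤ) :
    (∏ i ∈ s, (c + g i)) * ∏ i ∈ s, (c - g i) ≡ (-1) ^ #s * (∏ i ∈ s, g i) ^ 2 [ZMOD c ^ 2] := by
  rw [← prod_mul_distrib, ← prod_pow, ← prod_neg]
  refine Int.ModEq.prod fun i _ => ?_
  exact Int.modEq_iff_dvd.mpr ⟨-1, by ring⟩

theorem prod_filter_not_dvd_Icc_sub {p n : ℕ} (hpn : p ∣ n) :
    ∏ i ∈ {i ∈ Icc 1 n | ¬p ∣ i}, ((n : ℤ) - i) = ∏ i ∈ {i ∈ Icc 1 n | ¬p ∣ i}, (i : ℤ) := by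
  have hmem : ∀ i ∈ {i ∈ Icc 1 n | ¬p ∣ i}, n - i ∈ {i ∈ Icc 1 n | ¬p ∣ i} ∧ i < n := by
    intro i hi
    simp only [mem_filter, mem_Icc] at hi ⊢
    have hin : i ≠ n := fun h => hi.2 (h ▸ hpn)
    refine ⟨⟨by omega, fun h => hi.2 ?_⟩, by omega⟩
    simpa [Nat.sub_sub_self hi.1.2] using Nat.dvd_sub hpn h
  refine prod_nbij' (n - ·) (n - ·) (fun i hi => (hmem i hi).1) (fun i hi => (hmem i hi).1)
    (fun i hi => Nat.sub_sub_self (hmem i hi).2.le) (fun i hi => Nat.sub_sub_self (hmem i hi).2.le)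
    fun i hi => ?_
  rw [Nat.cast_sub (hmem i hi).2.le]

theorem choose_mul_prod_filter_not_dvd (p : ℕ) {t : ℕ} (hp : 0 < p) (ht : t ≠ 0) :
    (2 * (p * t) - 1).choose (p * t - 1) * ∏ i ∈ {i ∈ Icc 1 (p * t) | ¬p ∣ i}, i =
      (2 * t - 1).choose (t - 1) * ∏ i ∈ {i ∈ Icc 1 (p * t) | ¬p ∣ i}, (p * t + i) := by
  have h := centralBinom_mul_prod_filter_not_dvd p t hp
  rw [centralBinom_eq_two_mul_choose_pred (mul_ne_zero hp.ne' ht),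
    centralBinom_eq_two_mul_choose_pred ht, mul_assoc, mul_assoc] at h
  exact Nat.eq_of_mul_eq_mul_left two_pos h

theorem prod_filter_not_dvd_add_mul_prod_modEq {p n : ℕ} (hpn : p ∣ n) :
    (∏ i ∈ {i ∈ Icc 1 n | ¬p ∣ i}, ((n : ℤ) + i)) * ∏ i ∈ {i ∈ Icc 1 n | ¬p ∣ i}, (i : ℤ) ≡
      (-1) ^ #{i ∈ Icc 1 n | ¬p ∣ i} * (∏ i ∈ {i ∈ Icc 1 n | ¬p ∣ i}, (i : ℤ)) ^ 2
        [ZMOD n ^ 2] := by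
  have h := prod_add_mul_prod_sub_modEq {i ∈ Icc 1 n | ¬p ∣ i} (n : ℤ) (fun i => (i : ℤ))
  rwa [prod_filter_not_dvd_Icc_sub hpn] at h

theorem pow_dvd_neg_one_pow_mul_choose_sub {p b t : ℕ} (hp : p.Prime) (hbt : p ^ b ∣ t) :
    (p : ℤ) ^ (2 * (b + 1)) ∣
      (-1) ^ (p * t) * ((2 * (p * t) - 1).choose (p * t - 1) : ℤ) -
        (-1) ^ t * ((2 * t - 1).choose (t - 1) : ℤ) := by
  obtain rfl | ht := eq_or_ne t 0
  · simp
  set n := p * t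
  set I := {i ∈ Icc 1 n | ¬p ∣ i}
  set A : ℤ := ∏ i ∈ I, ((n : ℤ) + i)
  set B : ℤ := ∏ i ∈ I, (i : ℤ)
  set X : ℤ := ((2 * n - 1).choose (n - 1) : ℤ)
  set Y : ℤ := ((2 * t - 1).choose (t - 1) : ℤ)
  set ε : ℤ := (-1) ^ #I
  have hXB : X * B = Y * A := by
    have h := congrArg ((↑) : ℕ → ℤ) (choose_mul_prod_filter_not_dvd p hp.pos ht)
    push_cast at h
    exact h
  have hAB : (n : ℤ) ^ 2 ∣ A * B - ε * B ^ 2 :=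
    (prod_filter_not_dvd_add_mul_prod_modEq (dvd_mul_right p t)).symm.dvd
  have hpn : (p : ℤ) ^ (2 * (b + 1)) ∣ (n : ℤ) ^ 2 := by
    have h : p ^ (b + 1) ∣ n := by rw [pow_succ']; exact mul_dvd_mul_left p hbt
    rw [mul_comm, pow_mul]
    exact_mod_cast pow_dvd_pow_of_dvd h 2
  have hpB : IsCoprime ((p : ℤ) ^ (2 * (b + 1))) (B ^ 2) := by
    refine (IsCoprime.prod_right fun i hi => ?_).pow
    exact Nat.isCoprime_iff_coprime.mpr (hp.coprime_iff_not_dvd.mpr (mem_filter.mp hi).2)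
  have hXY : (p : ℤ) ^ (2 * (b + 1)) ∣ X - ε * Y := by
    refine hpB.dvd_of_dvd_mul_right ?_
    have h : (X - ε * Y) * B ^ 2 = Y * (A * B - ε * B ^ 2) := by linear_combination B * hXB
    rw [h]
    exact (hpn.trans hAB).mul_left Y
  have hsign : (-1 : ℤ) ^ n * ε = (-1) ^ t := by
    rw [show n = #I + t from (card_filter_not_dvd_Icc_mul_add p t hp.pos).symm, ← pow_add,
      add_right_comm, ← two_mul, pow_add, pow_mul, neg_one_sq, one_pow, one_mul]
  rw [show (-1) ^ n * X - (-1) ^ t * Y = (-1) ^ n * (X - ε * Y) by linear_combination Y * hsign]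
  exact hXY.mul_left _

/-- Integrality of the Klemm–Pandharipande invariants of `Tot(O(-1) ⊕ O(-2) → P²)`
(Theorem 6.3 for `P²(1,4)`): for every `d ≥ 1`, `d²` divides
`∑_{k ∣ d} μ(k) (-1)^{d/k} C(2d/k - 1, d/k - 1)`. -/
theorem stmt7 (d : ℕ) (hd : 1 ≤ d) :
    ((d : ℤ) ^ 2) ∣
      ∑ k ∈ d.divisors,
        ArithmeticFunction.moebius k * (-1) ^ (d / k) *
          ((2 * (d / k) - 1).choose (d / k - 1) : ℤ) := by
  have h := pow_dvd_sum_moebius_mul (fun n => (-1) ^ n * ((2 * n - 1).choose (n - 1) : ℤ)) 2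
    (fun _ _ _ hp hbt => pow_dvd_neg_one_pow_mul_choose_sub hp hbt) (by omega : d ≠ 0)
  simpa only [mul_assoc] using h
end

section
/- For all integers d1, d2 ≥ 1, the square (d1 + d2)² divides ∑_{k ∣ gcd(d1, d2)} μ(k) · C((d1 + d2)/k, d1/k)². -/
/-!
It suffices to show that `p ^ (2 * e)` divides the sum whenever `p ^ e ∣ d1 + d2`.

If `p ∤ gcd d1 d2`, every term is divisible by `p ^ (2 * e)`: writing `a = d1 / k`,
`b = d2 / k`, we have `p ^ e ∣ a + b`, `p` does not divide both `a` and `b`, and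
`C(a + b, a) * a = (a + b) * C(a + b - 1, a - 1)`.

If `p ∣ gcd d1 d2`, the terms for `k` and `p * k` (with `p ∤ k`) pair up, as
`μ (p * k) = - μ k`, leaving `μ k * (C(p m, p r) ^ 2 - C(m, r) ^ 2)` with `m = r + w` and
`p ^ (e - 1) ∣ m`. Splitting off the multiples of `p` in `(p r)!` and in `(p w + 1) ⋯ (p w + p r)`
gives `C(p m, p r) * P = C(m, r) * P'`, where `P = ∏ j` and `P' = ∏ (p w + j)` run over the
`j ∈ (0, p r]` prime to `p`. Modulo `(p w) ^ 2`, `P' - P ≡ p w * ∑_j ∏_{i ≠ j} i`, and the inner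
sum vanishes modulo `p r` by the pairing `j ↔ p r - j`. So with `β = min (v_p r) (v_p w)`,
`p ^ (2 β + 2) ∣ P' ^ 2 - P ^ 2`, while `p ^ (e - 1 - β) ∣ C(m, r)`.
-/

open Finset ArithmeticFunction
open scoped Nat

namespace Nat

lemma prod_Ioc_add_eq_factorial_mul_choose (a k : ℕ) :
    ∏ j ∈ Ioc 0 k, (a + j) = k ! * (a + k).choose k := by
  induction k with
  | zero => simp
  | succ k ih =>
    rw [prod_Ioc_succ_top k.zero_le, ih, ← add_assoc, Nat.factorial_succ]
    linear_combination (k !) * Nat.add_one_mul_choose_eq (a + k) k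

lemma prod_Ioc_id_eq_factorial (k : ℕ) : ∏ j ∈ Ioc 0 k, j = k ! := by
  simpa using prod_Ioc_add_eq_factorial_mul_choose 0 k

lemma pow_sub_factorization_dvd_choose {p N A e : ℕ} (hp : p.Prime) (hA : A ≠ 0)
    (hN : p ^ e ∣ N) : p ^ (e - A.factorization p) ∣ N.choose A := by
  rcases eq_or_ne (N.choose A) 0 with h | h
  · rw [h]
    exact dvd_zero _
  have hCA : p ^ e ∣ N.choose A * A := by
    obtain ⟨B, rfl⟩ := Nat.exists_eq_add_one_of_ne_zero hA
    obtain ⟨M, rfl⟩ := Nat.exists_eq_add_one_of_ne_zero fun hN0 : N = 0 => h (by simp [hN0])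
    rw [← Nat.add_one_mul_choose_eq]
    exact hN.mul_right _
  have hle := (hp.pow_dvd_iff_le_factorization (mul_ne_zero h hA)).mp hCA
  rw [Nat.factorization_mul h hA, Finsupp.add_apply] at hle
  exact (hp.pow_dvd_iff_le_factorization h).mpr (by omega)

lemma pow_dvd_choose_add_of_not_dvd {p a b e : ℕ} (hp : p.Prime) (he : p ^ e ∣ a + b)
    (hab : ¬ (p ∣ a ∧ p ∣ b)) : p ^ e ∣ (a + b).choose a := by
  by_cases ha : p ∣ a
  · have hb : ¬ p ∣ b := fun hb => hab ⟨ha, hb⟩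
    rw [Nat.choose_symm_add]
    simpa [Nat.factorization_eq_zero_of_not_dvd hb] using
      pow_sub_factorization_dvd_choose hp (fun h0 : b = 0 => hb (h0 ▸ dvd_zero p)) he
  · simpa [Nat.factorization_eq_zero_of_not_dvd ha] using
      pow_sub_factorization_dvd_choose hp (fun h0 : a = 0 => ha (h0 ▸ dvd_zero p)) he

end Nat

namespace Int

lemma sq_dvd_of_forall_prime_pow_dvd {n : ℕ} {z : ℤ}
    (h : ∀ p e : ℕ, p.Prime → p ^ e ∣ n → (p : ℤ) ^ (2 * e) ∣ z) : (n : ℤ) ^ 2 ∣ z := by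
  rcases eq_or_ne n 0 with rfl | hn
  · have h2 := h 2 z.natAbs Nat.prime_two (dvd_zero _)
    rw [Int.eq_zero_of_dvd_of_natAbs_lt_natAbs h2 (by
      rw [Int.natAbs_pow, Int.natAbs_natCast, pow_mul]
      exact Nat.lt_two_pow_self.trans_le (Nat.pow_le_pow_left (by norm_num) _))]
    exact dvd_zero _
  rw [← Nat.cast_pow, Int.natCast_dvd, Nat.dvd_iff_prime_pow_dvd_dvd]
  intro p k hp hk
  have hle := (hp.pow_dvd_iff_le_factorization (pow_ne_zero 2 hn)).mp hk
  rw [Nat.factorization_pow, Finsupp.smul_apply, smul_eq_mul] at hle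
  exact (pow_dvd_pow p hle).trans (Int.natCast_dvd.mp (h p _ hp (Nat.ordProj_dvd n p)))

end Int

namespace Finset

variable {ι R : Type*} [CommRing R] [DecidableEq ι]

theorem sq_dvd_prod_add_sub_prod_sub_mul_sum_prod_erase (s : Finset ι) (x : R) (a : ι → R) :
    x ^ 2 ∣ ∏ i ∈ s, (x + a i) - ∏ i ∈ s, a i - x * ∑ i ∈ s, ∏ j ∈ s.erase i, a j := by
  induction s using Finset.induction_on with
  | empty => simp
  | insert b s hb ih =>
    have herase : ∑ i ∈ s, ∏ j ∈ (insert b s).erase i, a j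
        = a b * ∑ i ∈ s, ∏ j ∈ s.erase i, a j := by
      rw [mul_sum]
      refine sum_congr rfl fun i hi => ?_
      rw [erase_insert_of_ne (ne_of_mem_of_not_mem hi hb).symm,
        prod_insert fun h => hb (mem_of_mem_erase h)]
    rw [prod_insert hb, prod_insert hb, sum_insert hb, erase_insert hb, herase]
    obtain ⟨c, hc⟩ := ih
    exact ⟨(x + a b) * c + ∑ i ∈ s, ∏ j ∈ s.erase i, a j, by linear_combination (x + a b) * hc⟩

theorem sum_prod_erase_eq_zero_of_involution {s : Finset ι} (a : ι → R) (σ : ι → ι)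
    (hσ : ∀ i ∈ s, σ i ∈ s) (hσσ : ∀ i ∈ s, σ (σ i) = i) (hne : ∀ i ∈ s, σ i ≠ i)
    (hneg : ∀ i ∈ s, a (σ i) = -a i) :
    ∑ i ∈ s, ∏ j ∈ s.erase i, a j = 0 := by
  refine sum_involution (fun i _ => σ i) (fun i hi => ?_) (fun i hi _ => hne i hi)
    (fun i hi => hσ i hi) (fun i hi => hσσ i hi)
  have h1 : σ i ∈ s.erase i := mem_erase.mpr ⟨hne i hi, hσ i hi⟩
  have h2 : i ∈ s.erase (σ i) := mem_erase.mpr ⟨(hne i hi).symm, hi⟩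
  rw [← mul_prod_erase _ _ h1, ← mul_prod_erase _ _ h2, erase_right_comm, hneg i hi]
  ring

end Finset

namespace ArithmeticFunction

lemma moebius_prime_mul {p k : ℕ} (hp : p.Prime) (hpk : ¬ p ∣ k) :
    moebius (p * k) = -moebius k := by
  rw [isMultiplicative_moebius.map_mul_of_coprime ((hp.coprime_iff_not_dvd).mpr hpk),
    moebius_apply_prime hp, neg_one_mul]

lemma sum_divisors_moebius_mul_eq_sum_sub {p g : ℕ} (hp : p.Prime) (hpg : p ∣ g) (f : ℕ → ℤ) :
    ∑ k ∈ g.divisors, moebius k * f k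
      = ∑ k ∈ g.divisors with ¬ p ∣ k, moebius k * (f k - f (p * k)) := by
  have hmult : ∑ k ∈ g.divisors with p ∣ k, moebius k * f k
      = ∑ k ∈ g.divisors with ¬ p ∣ k, moebius (p * k) * f (p * k) := by
    symm
    refine sum_bij_ne_zero (fun k _ _ => p * k) ?_ ?_ ?_ fun _ _ _ => rfl
    · intro k hk _
      simp only [mem_filter, Nat.mem_divisors] at hk ⊢
      exact ⟨⟨((hp.coprime_iff_not_dvd).mpr hk.2).mul_dvd_of_dvd_of_dvd hpg hk.1.1, hk.1.2⟩,
        dvd_mul_right p k⟩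
    · intro a _ _ b _ _ h
      exact Nat.eq_of_mul_eq_mul_left hp.pos h
    · intro b hb hne
      simp only [mem_filter, Nat.mem_divisors] at hb
      obtain ⟨⟨hbg, hg⟩, c, rfl⟩ := hb
      have hsq : Squarefree (p * c) :=
        moebius_ne_zero_iff_squarefree.mp (left_ne_zero_of_mul hne)
      have hpc : ¬ p ∣ c := fun h =>
        hp.one_lt.ne' (Nat.isUnit_iff.mp (hsq p (mul_dvd_mul_left p h)))
      exact ⟨c, by simp [hpc, hg, (dvd_mul_left c p).trans hbg], hne, rfl⟩
  rw [← sum_filter_add_sum_filter_not g.divisors (p ∣ ·), hmult, ← sum_add_distrib]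
  refine sum_congr rfl fun k hk => ?_
  rw [moebius_prime_mul hp (mem_filter.mp hk).2]
  ring

end ArithmeticFunction

namespace KlemmPandharipande

def nonMultiples (p n : ℕ) : Finset ℕ := {j ∈ Ioc 0 n | ¬ p ∣ j}

lemma mem_nonMultiples {p n j : ℕ} : j ∈ nonMultiples p n ↔ (0 < j ∧ j ≤ n) ∧ ¬ p ∣ j := by
  rw [nonMultiples, mem_filter, mem_Ioc]

lemma prod_Ioc_mul_eq_prod_mul_prod_nonMultiples {M : Type*} [CommMonoid M] {p : ℕ}
    (hp : 0 < p) (r : ℕ) (f : ℕ → M) :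
    ∏ j ∈ Ioc 0 (p * r), f j
      = (∏ i ∈ Ioc 0 r, f (p * i)) * ∏ j ∈ nonMultiples p (p * r), f j := by
  rw [nonMultiples, ← prod_filter_mul_prod_filter_not (Ioc 0 (p * r)) (p ∣ ·)]
  congr 1
  symm
  apply prod_nbij' (p * ·) (· / p) <;> simp only [mem_filter, mem_Ioc]
  · intro i hi
    exact ⟨⟨Nat.mul_pos hp hi.1, Nat.mul_le_mul_left p hi.2⟩, dvd_mul_right p i⟩
  · rintro j ⟨⟨h0, hle⟩, i, rfl⟩
    rw [Nat.mul_div_cancel_left i hp]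
    exact ⟨Nat.pos_of_mul_pos_left h0, Nat.le_of_mul_le_mul_left hle hp⟩
  · exact fun i _ => Nat.mul_div_cancel_left i hp
  · exact fun j hj => Nat.mul_div_cancel' hj.2
  · exact fun _ _ => trivial

lemma choose_mul_prod_nonMultiples {p : ℕ} (hp : 0 < p) (r w : ℕ) :
    (p * (r + w)).choose (p * r) * ∏ j ∈ nonMultiples p (p * r), j
      = (r + w).choose r * ∏ j ∈ nonMultiples p (p * r), (p * w + j) := by
  have hfac := prod_Ioc_mul_eq_prod_mul_prod_nonMultiples hp r id
  have hasc := prod_Ioc_mul_eq_prod_mul_prod_nonMultiples hp r (p * w + ·)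
  simp only [id] at hfac
  rw [Nat.prod_Ioc_id_eq_factorial, prod_mul_distrib, prod_const, Nat.card_Ioc, Nat.sub_zero,
    Nat.prod_Ioc_id_eq_factorial] at hfac
  simp only [← mul_add, prod_mul_distrib, prod_const, Nat.card_Ioc, Nat.sub_zero,
    Nat.prod_Ioc_add_eq_factorial_mul_choose, add_comm w r] at hasc
  apply Nat.eq_of_mul_eq_mul_left (by positivity : 0 < p ^ r * r !)
  calc p ^ r * r ! * ((p * (r + w)).choose (p * r) * ∏ j ∈ nonMultiples p (p * r), j)
      = (p * r)! * (p * (r + w)).choose (p * r) := by rw [hfac]; ring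
    _ = _ := by rw [hasc]; ring

lemma dvd_sum_prod_erase_nonMultiples {p n : ℕ} (hpn : p ∣ n)
    (hfix : ∀ j ∈ nonMultiples p n, 2 * j ≠ n) :
    (n : ℤ) ∣ ∑ j ∈ nonMultiples p n, ∏ i ∈ (nonMultiples p n).erase j, (i : ℤ) := by
  have hlt : ∀ j ∈ nonMultiples p n, j < n := fun j hj =>
    lt_of_le_of_ne (mem_nonMultiples.mp hj).1.2 fun h => (mem_nonMultiples.mp hj).2 (h ▸ hpn)
  have hmem : ∀ j ∈ nonMultiples p n, n - j ∈ nonMultiples p n := by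
    intro j hj
    refine mem_nonMultiples.mpr ⟨⟨Nat.sub_pos_of_lt (hlt j hj), Nat.sub_le n j⟩, fun h => ?_⟩
    exact (mem_nonMultiples.mp hj).2
      (by simpa [Nat.sub_sub_self (hlt j hj).le] using Nat.dvd_sub hpn h)
  rw [← ZMod.intCast_zmod_eq_zero_iff_dvd]
  push_cast
  refine sum_prod_erase_eq_zero_of_involution _ (n - ·) hmem
    (fun j hj => Nat.sub_sub_self (hlt j hj).le) (fun j hj => by have := hfix j hj; omega)
    (fun j hj => ?_)
  rw [Nat.cast_sub (hlt j hj).le, ZMod.natCast_self, zero_sub]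

lemma not_dvd_prod_nonMultiples {p : ℕ} (hp : p.Prime) (n c : ℕ) :
    ¬ p ∣ ∏ j ∈ nonMultiples p n, (p * c + j) := by
  rw [hp.prime.dvd_finsetProd_iff]
  rintro ⟨j, hj, hdvd⟩
  exact (mem_nonMultiples.mp hj).2 ((Nat.dvd_add_right (dvd_mul_right p c)).mp hdvd)

lemma pow_dvd_sq_prod_sub_sq_prod_nonMultiples {p : ℕ} (hp : p.Prime) {r w β : ℕ}
    (hr : p ^ β ∣ r) (hw : p ^ β ∣ w) :
    (p : ℤ) ^ (2 * β + 2) ∣ (∏ j ∈ nonMultiples p (p * r), ((p : ℤ) * w + j)) ^ 2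
      - (∏ j ∈ nonMultiples p (p * r), (j : ℤ)) ^ 2 := by
  set J := nonMultiples p (p * r)
  have hint : ∀ c : ℕ, ¬ (p : ℤ) ∣ ∏ j ∈ J, ((p : ℤ) * c + j) := fun c h =>
    not_dvd_prod_nonMultiples hp (p * r) c (by exact_mod_cast h)
  by_cases hfix : p = 2 ∧ ¬ 2 ∣ r
  · -- `j = r` is fixed by `j ↦ 2 r - j`; here `β = 0` and odd squares are `1` modulo `4`.
    obtain ⟨rfl, hr2⟩ := hfix
    have hβ : β = 0 := by
      by_contra hβ
      exact hr2 ((dvd_pow_self 2 hβ).trans hr)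
    have hsq : ∀ c : ℕ, (∏ j ∈ J, ((2 : ℤ) * c + j)) ^ 2 ≡ 1 [ZMOD 4] := fun c =>
      Int.sq_mod_four_eq_one_of_odd
        (Int.not_even_iff_odd.mp fun h => hint c (by exact_mod_cast h.two_dvd))
    simpa [hβ] using ((hsq 0).trans (hsq w).symm).dvd
  have hnofix : ∀ j ∈ J, 2 * j ≠ p * r := by
    intro j hj h2j
    have hj' := mem_nonMultiples.mp hj
    rcases (Nat.Prime.dvd_mul hp).mp (Dvd.intro r h2j.symm) with h | h
    · obtain rfl : p = 2 := (Nat.prime_dvd_prime_iff_eq hp Nat.prime_two).mp h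
      exact hfix ⟨rfl, fun h2r => hj'.2 (by omega)⟩
    · exact hj'.2 h
  have hx : (p : ℤ) ^ (β + 1) ∣ (p : ℤ) * w := by
    rw [pow_succ']
    exact mul_dvd_mul_left _ (by exact_mod_cast hw)
  have hE : (p : ℤ) ^ (β + 1) ∣ ∑ j ∈ J, ∏ i ∈ J.erase j, (i : ℤ) := by
    refine dvd_trans ?_ (dvd_sum_prod_erase_nonMultiples (dvd_mul_right p r) hnofix)
    rw [pow_succ']
    push_cast
    exact mul_dvd_mul_left _ (by exact_mod_cast hr)
  have hdiff : ((p : ℤ) ^ (β + 1)) ^ 2 ∣ ∏ j ∈ J, ((p : ℤ) * w + j) - ∏ j ∈ J, (j : ℤ) := by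
    rw [← sub_add_cancel (_ - _) ((p : ℤ) * w * ∑ j ∈ J, ∏ i ∈ J.erase j, (i : ℤ))]
    exact dvd_add ((pow_dvd_pow_of_dvd hx 2).trans
      (sq_dvd_prod_add_sub_prod_sub_mul_sum_prod_erase J _ _))
      (sq ((p : ℤ) ^ (β + 1)) ▸ mul_dvd_mul hx hE)
  rw [sq_sub_sq, show 2 * β + 2 = (β + 1) * 2 by ring, pow_mul]
  exact hdiff.mul_left _

lemma pow_dvd_choose_mul_sq_sub_choose_sq {p r w e : ℕ} (hp : p.Prime) (he : p ^ e ∣ r + w) :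
    (p : ℤ) ^ (2 * e + 2) ∣
      ((p * (r + w)).choose (p * r) : ℤ) ^ 2 - ((r + w).choose r : ℤ) ^ 2 := by
  rcases eq_or_ne r 0 with rfl | hr
  · simp
  rcases eq_or_ne w 0 with rfl | hw
  · simp
  have hid : ((p * (r + w)).choose (p * r) : ℤ) * ∏ j ∈ nonMultiples p (p * r), (j : ℤ)
      = ((r + w).choose r : ℤ) * ∏ j ∈ nonMultiples p (p * r), ((p : ℤ) * w + j) := by
    simpa using congrArg (Nat.cast : ℕ → ℤ) (choose_mul_prod_nonMultiples hp.pos r w)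
  set β := min (r.factorization p) (w.factorization p) with hβ
  set J := nonMultiples p (p * r)
  have hY : p ^ (e - β) ∣ (r + w).choose r := by
    rcases le_total (r.factorization p) (w.factorization p) with h | h
    · rw [hβ, min_eq_left h]
      exact Nat.pow_sub_factorization_dvd_choose hp hr he
    · rw [hβ, min_eq_right h, Nat.choose_symm_add]
      exact Nat.pow_sub_factorization_dvd_choose hp hw he
  have hP := pow_dvd_sq_prod_sub_sq_prod_nonMultiples hp (w := w)
    ((pow_dvd_pow p (min_le_left _ _)).trans (Nat.ordProj_dvd r p))
    ((pow_dvd_pow p (min_le_right _ _)).trans (Nat.ordProj_dvd w p))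
  have hcop : IsCoprime ((p : ℤ) ^ (2 * e + 2)) ((∏ j ∈ J, (j : ℤ)) ^ 2) := by
    have h := Nat.isCoprime_iff_coprime.mpr
      ((hp.coprime_iff_not_dvd).mpr (not_dvd_prod_nonMultiples hp (p * r) 0))
    push_cast at h
    simpa using h.pow
  refine hcop.dvd_of_dvd_mul_left ?_
  have hsq : (∏ j ∈ J, (j : ℤ)) ^ 2
        * (((p * (r + w)).choose (p * r) : ℤ) ^ 2 - ((r + w).choose r : ℤ) ^ 2)
      = ((r + w).choose r : ℤ) ^ 2
        * ((∏ j ∈ J, ((p : ℤ) * w + j)) ^ 2 - (∏ j ∈ J, (j : ℤ)) ^ 2) := by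
    linear_combination (((p * (r + w)).choose (p * r) : ℤ) * ∏ j ∈ J, (j : ℤ)
      + ((r + w).choose r : ℤ) * ∏ j ∈ J, ((p : ℤ) * w + j)) * hid
  rw [hsq]
  calc (p : ℤ) ^ (2 * e + 2) ∣ ((p : ℤ) ^ (e - β)) ^ 2 * (p : ℤ) ^ (2 * β + 2) := by
        rw [← pow_mul, ← pow_add]
        exact pow_dvd_pow _ (by omega)
    _ ∣ _ := mul_dvd_mul (pow_dvd_pow_of_dvd (by exact_mod_cast hY) 2) hP

/-- `(d1 + d2) ^ 2 * KP_(d1, d2)`. -/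
def kpNumerator (d1 d2 : ℕ) : ℤ :=
  ∑ k ∈ (Nat.gcd d1 d2).divisors, moebius k * (((d1 + d2) / k).choose (d1 / k) : ℤ) ^ 2

lemma pow_dvd_kpNumerator_of_not_dvd_gcd {p e d1 d2 : ℕ} (hp : p.Prime)
    (he : p ^ e ∣ d1 + d2) (hpg : ¬ p ∣ Nat.gcd d1 d2) :
    (p : ℤ) ^ (2 * e) ∣ kpNumerator d1 d2 := by
  refine dvd_sum fun k hk => dvd_mul_of_dvd_right ?_ _
  have hk0 : 0 < k := Nat.pos_of_mem_divisors hk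
  obtain ⟨hkg, -⟩ := Nat.mem_divisors.mp hk
  obtain ⟨a, rfl⟩ := hkg.trans (Nat.gcd_dvd_left d1 d2)
  obtain ⟨b, rfl⟩ := hkg.trans (Nat.gcd_dvd_right (k * a) d2)
  rw [← mul_add, Nat.mul_div_cancel_left _ hk0, Nat.mul_div_cancel_left _ hk0, mul_comm 2 e,
    pow_mul]
  rw [Nat.gcd_mul_left] at hpg
  rw [← mul_add] at he
  have hpk : Nat.Coprime (p ^ e) k :=
    Nat.Coprime.pow_left e ((hp.coprime_iff_not_dvd).mpr fun h => hpg (h.mul_right _))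
  have hab : p ^ e ∣ (a + b).choose a := Nat.pow_dvd_choose_add_of_not_dvd hp
    (hpk.dvd_of_dvd_mul_left he) fun h => hpg ((Nat.dvd_gcd h.1 h.2).mul_left k)
  exact pow_dvd_pow_of_dvd (by exact_mod_cast hab) 2

lemma pow_dvd_kpNumerator_of_dvd_gcd {p e d1 d2 : ℕ} (hp : p.Prime) (he : p ^ e ∣ d1 + d2)
    (hpg : p ∣ Nat.gcd d1 d2) : (p : ℤ) ^ (2 * e) ∣ kpNumerator d1 d2 := by
  rw [kpNumerator, sum_divisors_moebius_mul_eq_sum_sub hp hpg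
    fun k => (((d1 + d2) / k).choose (d1 / k) : ℤ) ^ 2]
  refine dvd_sum fun k hk => dvd_mul_of_dvd_right ?_ _
  obtain ⟨hk, hpk⟩ := mem_filter.mp hk
  have hk0 : 0 < k := Nat.pos_of_mem_divisors hk
  have hpk_dvd : p * k ∣ Nat.gcd d1 d2 :=
    ((hp.coprime_iff_not_dvd).mpr hpk).mul_dvd_of_dvd_of_dvd hpg (Nat.dvd_of_mem_divisors hk)
  obtain ⟨r, hr⟩ := hpk_dvd.trans (Nat.gcd_dvd_left d1 d2)
  obtain ⟨w, hw⟩ := hpk_dvd.trans (Nat.gcd_dvd_right d1 d2)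
  have hpk0 : 0 < p * k := Nat.mul_pos hp.pos hk0
  rw [Nat.div_eq_of_eq_mul_left hk0 (by rw [hr, hw]; ring : d1 + d2 = p * (r + w) * k),
    Nat.div_eq_of_eq_mul_left hk0 (by rw [hr]; ring : d1 = p * r * k),
    Nat.div_eq_of_eq_mul_left hpk0 (by rw [hr, hw]; ring : d1 + d2 = (r + w) * (p * k)),
    Nat.div_eq_of_eq_mul_left hpk0 (by rw [hr]; ring : d1 = r * (p * k))]
  have hpe : p ^ e ∣ p * (r + w) :=
    (Nat.Coprime.pow_left e ((hp.coprime_iff_not_dvd).mpr hpk)).dvd_of_dvd_mul_right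
      (by rwa [hr, hw, ← mul_add, mul_right_comm] at he)
  have hpe' : p ^ (e - 1) ∣ r + w := by
    rcases Nat.eq_zero_or_pos e with rfl | he0
    · exact one_dvd _
    · rw [← Nat.mul_dvd_mul_iff_left hp.pos, ← pow_succ', Nat.sub_add_cancel he0]
      exact hpe
  exact (pow_dvd_pow _ (by omega)).trans (pow_dvd_choose_mul_sq_sub_choose_sq hp hpe')

end KlemmPandharipande

theorem stmt8_general (d1 d2 : ℕ) :
    ((d1 + d2 : ℤ) ^ 2) ∣
      ∑ k ∈ (Nat.gcd d1 d2).divisors,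
        ArithmeticFunction.moebius k * (((d1 + d2) / k).choose (d1 / k) : ℤ) ^ 2 := by
  have h : ((d1 + d2 : ℕ) : ℤ) ^ 2 ∣ KlemmPandharipande.kpNumerator d1 d2 :=
    Int.sq_dvd_of_forall_prime_pow_dvd fun p e hp he => by
      by_cases hpg : p ∣ Nat.gcd d1 d2
      · exact KlemmPandharipande.pow_dvd_kpNumerator_of_dvd_gcd hp he hpg
      · exact KlemmPandharipande.pow_dvd_kpNumerator_of_not_dvd_gcd hp he hpg
  exact_mod_cast h

/-- Integrality of the Klemm–Pandharipande invariants of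
`Tot(O(-1,-1) ⊕ O(-1,-1) → P¹×P¹)` (Theorem 6.3 for `F₀(2,2)`): for all `d1, d2 ≥ 1`,
`(d1 + d2)²` divides `∑_{k ∣ gcd(d1,d2)} μ(k) C((d1+d2)/k, d1/k)²`. -/
theorem stmt8 (d1 d2 : ℕ) (h1 : 1 ≤ d1) (h2 : 1 ≤ d2) :
    ((d1 + d2 : ℤ) ^ 2) ∣
      ∑ k ∈ (Nat.gcd d1 d2).divisors,
        ArithmeticFunction.moebius k * (((d1 + d2) / k).choose (d1 / k) : ℤ) ^ 2 :=
  stmt8_general d1 d2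
end

section
/- For all integers n ≥ 1 and d ≥ 1, the product (n + 1)·d² divides ∑_{k ∣ d} μ(k) · (−1)^{n·d/k} · C((n + 1)·d/k, d/k). -/
/-!
Since `C((n+1)m, m) = (n+1) b(m)` with `b(m) = (-1)^{nm} C((n+1)m - 1, m - 1)`, it suffices that
`d² ∣ ∑_{k ∣ d} μ(k) b(d/k)`. For a prime `p ∣ d`, pairing each divisor `k` prime to `p` with `pk`
turns the sum into `∑ μ(k) (b(pM) - b(M))` with `v_p(M) = v_p(d) - 1`, so it is enough to prove the
Jacobsthal-type congruence `b(pM) ≡ b(M) mod p^{2(v_p(M)+1)}`.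

Cancelling the multiples of `p` from the factorials gives
`C(p(B+D) - 1, pB - 1) ∏ k = C(B+D-1, B-1) ∏ (pD + k)`, both products over the `k ≤ pB` prime
to `p`. Modulo `x²`, `x = pD`, the right-hand product is `∏ k + x ∑_k ∏_{l ≠ k} l`, and the
involution `k ↦ pB - k` shows `pB ∣ ∑_k ∏_{l ≠ k} l`; as `p^{v_p(B)} ∣ D`, both correction terms
vanish modulo `p^{2(v_p(B)+1)}`. The involution has a fixed point only when `p = 2` and `B` is odd,
and there `2D + k ≡ (-1)^D k mod 4` factor by factor.
-/

open Finset ArithmeticFunction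
open scoped ArithmeticFunction.Moebius

section FinsetProd

variable {ι R : Type*} [CommRing R] [DecidableEq ι]

theorem sq_dvd_prod_add_sub (s : Finset ι) (f : ι → R) (x : R) :
    x ^ 2 ∣ ∏ i ∈ s, (x + f i) - (∏ i ∈ s, f i + x * ∑ i ∈ s, ∏ j ∈ s.erase i, f j) := by
  induction s using Finset.induction_on with
  | empty => simp
  | insert a s ha ih =>
    obtain ⟨c, hc⟩ := ih
    have herase : ∀ i ∈ s, ∏ j ∈ (insert a s).erase i, f j = f a * ∏ j ∈ s.erase i, f j :=
      fun i hi => by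
        rw [erase_insert_of_ne (ne_of_mem_of_not_mem hi ha).symm,
          prod_insert fun h => ha (mem_of_mem_erase h)]
    rw [prod_insert ha, prod_insert ha, sum_insert ha, erase_insert ha, sum_congr rfl herase,
      ← mul_sum]
    exact ⟨(x + f a) * c + ∑ i ∈ s, ∏ j ∈ s.erase i, f j, by linear_combination (x + f a) * hc⟩

theorem dvd_sum_prod_erase_of_involution {s : Finset ι} {f : ι → R} {a : R} (σ : ι → ι)
    (hσ : ∀ i ∈ s, σ i ∈ s) (hσσ : ∀ i ∈ s, σ (σ i) = i) (hne : ∀ i ∈ s, σ i ≠ i)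
    (hsum : ∀ i ∈ s, f i + f (σ i) = a) : a ∣ ∑ i ∈ s, ∏ j ∈ s.erase i, f j := by
  have hpair : ∀ i ∈ s, a ∣ ∏ j ∈ s.erase i, f j + ∏ j ∈ s.erase (σ i), f j := fun i hi => by
    rw [← mul_prod_erase _ _ (mem_erase.2 ⟨hne i hi, hσ i hi⟩),
      ← mul_prod_erase _ _ (mem_erase.2 ⟨(hne i hi).symm, hi⟩), erase_right_comm, ← add_mul,
      add_comm, hsum i hi]
    exact dvd_mul_right _ _
  rw [← Ideal.Quotient.eq_zero_iff_dvd, map_sum]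
  refine sum_involution (fun i _ => σ i) (fun i hi => ?_) (fun i hi _ => hne i hi) hσ hσσ
  rw [← map_add, Ideal.Quotient.eq_zero_iff_dvd]
  exact hpair i hi

end FinsetProd

theorem prod_Icc_add_eq_ascFactorial (x N : ℕ) :
    ∏ k ∈ Icc 1 N, (x + k) = (x + 1).ascFactorial N := by
  induction N with
  | zero => simp
  | succ N ih => rw [prod_Icc_succ_top (by omega), ih, Nat.ascFactorial_succ]; ring

theorem mul_choose_sub_one (a : ℕ) {b : ℕ} (hb : 0 < b) :
    a * (a - 1).choose (b - 1) = a.choose b * b := by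
  rcases Nat.eq_zero_or_pos a with rfl | ha
  · simp [Nat.choose_eq_zero_of_lt hb]
  · obtain ⟨a, rfl⟩ := Nat.exists_eq_add_of_lt ha
    obtain ⟨b, rfl⟩ := Nat.exists_eq_add_of_lt hb
    simpa using Nat.add_one_mul_choose_eq a b

theorem two_mul_add_modEq_four {k : ℤ} (hk : Odd k) (D : ℕ) :
    2 * D + k ≡ (-1) ^ D * k [ZMOD 4] := by
  obtain ⟨j, rfl⟩ := hk
  rcases Nat.even_or_odd D with hD | hD
  · obtain ⟨t, rfl⟩ := hD
    rw [Even.neg_one_pow ⟨t, rfl⟩]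
    exact Int.modEq_iff_dvd.2 ⟨-t, by push_cast; ring⟩
  · obtain ⟨t, rfl⟩ := hD
    rw [Odd.neg_one_pow ⟨t, rfl⟩]
    exact Int.modEq_iff_dvd.2 ⟨-(t + j + 1), by push_cast; ring⟩

def nonMultiples (p B : ℕ) : Finset ℕ := {k ∈ Icc 1 (p * B) | ¬ p ∣ k}

section NonMultiples

variable {p B : ℕ}

theorem mem_nonMultiples {k : ℕ} :
    k ∈ nonMultiples p B ↔ (1 ≤ k ∧ k ≤ p * B) ∧ ¬ p ∣ k := by
  rw [nonMultiples, mem_filter, mem_Icc]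

@[to_additive]
theorem prod_Icc_eq_prod_mul_prod_nonMultiples {M : Type*} [CommMonoid M] (hp : 0 < p)
    (f : ℕ → M) :
    ∏ k ∈ Icc 1 (p * B), f k = (∏ m ∈ Icc 1 B, f (p * m)) * ∏ k ∈ nonMultiples p B, f k := by
  have hmul : {k ∈ Icc 1 (p * B) | p ∣ k} = (Icc 1 B).image (p * ·) := by
    ext k
    simp only [mem_filter, mem_Icc, mem_image]
    constructor
    · rintro ⟨⟨h1, h2⟩, m, rfl⟩
      exact ⟨m, ⟨by nlinarith, Nat.le_of_mul_le_mul_left h2 hp⟩, rfl⟩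
    · rintro ⟨m, ⟨h1, h2⟩, rfl⟩
      exact ⟨⟨by nlinarith, Nat.mul_le_mul_left p h2⟩, dvd_mul_right p m⟩
  rw [nonMultiples, ← prod_filter_mul_prod_filter_not (Icc 1 (p * B)) (p ∣ ·), hmul,
    prod_image fun x _ y _ h => Nat.eq_of_mul_eq_mul_left hp h]

theorem card_nonMultiples (hp : 0 < p) : #(nonMultiples p B) = (p - 1) * B := by
  have h := sum_Icc_eq_sum_add_sum_nonMultiples (B := B) hp fun _ => 1
  simp only [sum_const, Nat.card_Icc, smul_eq_mul, mul_one, Nat.add_sub_cancel] at h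
  rw [Nat.sub_mul, one_mul]
  omega

theorem sub_mem_nonMultiples {k : ℕ} (hk : k ∈ nonMultiples p B) :
    p * B - k ∈ nonMultiples p B := by
  rw [mem_nonMultiples] at hk ⊢
  obtain ⟨⟨h1, h2⟩, hpk⟩ := hk
  have hne : k ≠ p * B := fun h => hpk (h ▸ dvd_mul_right p B)
  refine ⟨⟨by omega, by omega⟩, fun hdvd => hpk ?_⟩
  rw [← Nat.sub_sub_self h2]
  exact Nat.dvd_sub (dvd_mul_right p B) hdvd

theorem sub_ne_self_of_mem_nonMultiples (hp : p.Prime) (h : ¬(p = 2 ∧ Odd B)) {k : ℕ}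
    (hk : k ∈ nonMultiples p B) : p * B - k ≠ k := by
  rw [mem_nonMultiples] at hk
  obtain ⟨⟨-, hkB⟩, hpk⟩ := hk
  intro heq
  have h2k : 2 * k = p * B := by omega
  rcases hp.eq_two_or_odd' with rfl | hodd
  · exact h ⟨rfl, by rw [show B = k by omega]; exact Nat.odd_iff.2 (Nat.two_dvd_ne_zero.1 hpk)⟩
  · exact hpk ((Nat.coprime_two_left.2 hodd).symm.dvd_of_dvd_mul_left ⟨B, h2k⟩)

theorem even_card_nonMultiples (hp : p.Prime) (h : ¬(p = 2 ∧ Odd B)) :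
    Even #(nonMultiples p B) := by
  rw [card_nonMultiples hp.pos]
  rcases hp.eq_two_or_odd' with rfl | hodd
  · exact (Nat.not_odd_iff_even.1 fun hB => h ⟨rfl, hB⟩).mul_left _
  · exact (Nat.Odd.sub_odd hodd odd_one).mul_right _

theorem not_dvd_prod_nonMultiples (hp : p.Prime) :
    ¬ (p : ℤ) ∣ ∏ k ∈ nonMultiples p B, (k : ℤ) := by
  rw [(Nat.prime_iff_prime_int.1 hp).dvd_finsetProd_iff]
  rintro ⟨k, hk, hpk⟩
  exact (mem_nonMultiples.1 hk).2 (Int.natCast_dvd_natCast.1 hpk)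

theorem prod_Icc_mul_add (hp : 0 < p) (D : ℕ) :
    ∏ k ∈ Icc 1 (p * B), (p * D + k) =
      p ^ B * (D + 1).ascFactorial B * ∏ k ∈ nonMultiples p B, (p * D + k) := by
  rw [prod_Icc_eq_prod_mul_prod_nonMultiples hp, ← prod_Icc_add_eq_ascFactorial]
  simp only [← mul_add, prod_mul_distrib, prod_const, Nat.card_Icc, Nat.add_sub_cancel]

theorem choose_mul_prod_nonMultiples (hp : 0 < p) (D : ℕ) :
    (p * (B + D)).choose (p * B) * ∏ k ∈ nonMultiples p B, k =
      (B + D).choose B * ∏ k ∈ nonMultiples p B, (p * D + k) := by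
  have hfact : (p * B).factorial = p ^ B * B.factorial * ∏ k ∈ nonMultiples p B, k := by
    have h0 := prod_Icc_mul_add (B := B) hp 0
    rw [prod_Icc_add_eq_ascFactorial] at h0
    simpa [Nat.one_ascFactorial] using h0
  have hD := prod_Icc_mul_add (B := B) hp D
  rw [prod_Icc_add_eq_ascFactorial, Nat.ascFactorial_eq_factorial_mul_choose,
    Nat.ascFactorial_eq_factorial_mul_choose, hfact, ← mul_add, add_comm D] at hD
  apply Nat.eq_of_mul_eq_mul_left (by positivity : 0 < p ^ B * B.factorial)
  linear_combination hD

theorem choose_sub_one_mul_prod_nonMultiples (hp : 0 < p) (hB : 0 < B) (D : ℕ) :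
    (p * (B + D) - 1).choose (p * B - 1) * ∏ k ∈ nonMultiples p B, k =
      (B + D - 1).choose (B - 1) * ∏ k ∈ nonMultiples p B, (p * D + k) := by
  have hbig := mul_choose_sub_one (p * (B + D)) (Nat.mul_pos hp hB)
  have hsmall := mul_choose_sub_one (B + D) hB
  have h := choose_mul_prod_nonMultiples (B := B) hp D
  apply Nat.eq_of_mul_eq_mul_left (Nat.mul_pos hp (Nat.add_pos_left hB D))
  calc p * (B + D) * ((p * (B + D) - 1).choose (p * B - 1) * ∏ k ∈ nonMultiples p B, k)
      = p * B * ((p * (B + D)).choose (p * B) * ∏ k ∈ nonMultiples p B, k) := by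
        rw [← mul_assoc, hbig]; ring
    _ = p * ((B + D).choose B * B) * ∏ k ∈ nonMultiples p B, (p * D + k) := by rw [h]; ring
    _ = _ := by rw [← hsmall]; ring

theorem mul_dvd_sum_prod_erase_nonMultiples (hp : p.Prime) (h : ¬(p = 2 ∧ Odd B)) :
    (p * B : ℤ) ∣ ∑ k ∈ nonMultiples p B, ∏ l ∈ (nonMultiples p B).erase k, (l : ℤ) := by
  have hle : ∀ k ∈ nonMultiples p B, k ≤ p * B := fun k hk => (mem_nonMultiples.1 hk).1.2
  refine dvd_sum_prod_erase_of_involution (p * B - ·) (fun k => sub_mem_nonMultiples)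
    (fun k hk => by have := hle k hk; omega) (fun k => sub_ne_self_of_mem_nonMultiples hp h)
    fun k hk => ?_
  push_cast [Nat.cast_sub (hle k hk)]
  ring

theorem prod_nonMultiples_add_modEq (hp : p.Prime) {D : ℕ} (hD : p ^ B.factorization p ∣ D) :
    ∏ k ∈ nonMultiples p B, ((p : ℤ) * D + k) ≡
      (-1) ^ (D * #(nonMultiples p B)) * ∏ k ∈ nonMultiples p B, (k : ℤ)
      [ZMOD p ^ (2 * (B.factorization p + 1))] := by
  by_cases h : p = 2 ∧ Odd B
  · obtain ⟨rfl, hB⟩ := h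
    have hw : B.factorization 2 = 0 :=
      Nat.factorization_eq_zero_of_not_dvd (Nat.two_dvd_ne_zero.2 (Nat.odd_iff.1 hB))
    rw [hw, show ((2 : ℕ) : ℤ) ^ (2 * (0 + 1)) = 4 by norm_num, pow_mul, ← prod_const,
      ← prod_mul_distrib, Nat.cast_ofNat]
    refine Int.ModEq.prod fun k hk => two_mul_add_modEq_four ?_ D
    exact_mod_cast Nat.odd_iff.2 (Nat.two_dvd_ne_zero.1 (mem_nonMultiples.1 hk).2)
  · rw [((even_card_nonMultiples hp h).mul_left D).neg_one_pow, one_mul]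
    set S := nonMultiples p B
    set w := B.factorization p
    set x : ℤ := p * D
    have hx : (p : ℤ) ^ (w + 1) ∣ x := by
      rw [pow_succ']
      exact mul_dvd_mul_left _ (by exact_mod_cast hD)
    have hlin : (p : ℤ) ^ (w + 1) ∣ ∑ k ∈ S, ∏ l ∈ S.erase k, (l : ℤ) := by
      refine .trans ?_ (mul_dvd_sum_prod_erase_nonMultiples hp h)
      rw [pow_succ']
      exact mul_dvd_mul_left _ (by exact_mod_cast Nat.ordProj_dvd B p)
    obtain ⟨c, hc⟩ := sq_dvd_prod_add_sub S (fun k => (k : ℤ)) x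
    refine (Int.modEq_iff_dvd.2 ?_).symm
    have hdiff : ∏ k ∈ S, (x + k) - ∏ k ∈ S, (k : ℤ) =
        x ^ 2 * c + x * ∑ k ∈ S, ∏ l ∈ S.erase k, (l : ℤ) := by
      linear_combination hc
    rw [hdiff]
    refine dvd_add (dvd_mul_of_dvd_left ?_ c) ?_
    · rw [mul_comm, pow_mul]
      exact pow_dvd_pow_of_dvd hx 2
    · rw [two_mul, pow_add]
      exact mul_dvd_mul hx hlin

end NonMultiples

theorem choose_mul_sub_one_modEq {p B D : ℕ} (hp : p.Prime) (hB : 0 < B)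
    (hD : p ^ B.factorization p ∣ D) :
    ((p * (B + D) - 1).choose (p * B - 1) : ℤ) ≡
      (-1) ^ (D * ((p - 1) * B)) * (B + D - 1).choose (B - 1)
      [ZMOD p ^ (2 * (B.factorization p + 1))] := by
  have hcop : IsCoprime ((p : ℤ) ^ (2 * (B.factorization p + 1)))
      (∏ k ∈ nonMultiples p B, (k : ℤ)) :=
    ((Nat.prime_iff_prime_int.1 hp).coprime_iff_not_dvd.2 (not_dvd_prod_nonMultiples hp)).pow_left
  have hid : ((p * (B + D) - 1).choose (p * B - 1) : ℤ) * ∏ k ∈ nonMultiples p B, (k : ℤ) =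
      (B + D - 1).choose (B - 1) * ∏ k ∈ nonMultiples p B, ((p : ℤ) * D + k) := by
    have h := congrArg (Nat.cast (R := ℤ)) (choose_sub_one_mul_prod_nonMultiples hp.pos hB D)
    push_cast at h
    exact h
  have h := (prod_nonMultiples_add_modEq hp hD).mul_left ((B + D - 1).choose (B - 1) : ℤ)
  rw [← hid, card_nonMultiples hp.pos] at h
  exact Int.modEq_iff_dvd.2 (hcop.dvd_of_dvd_mul_right (h.dvd.trans (dvd_of_eq (by ring))))

theorem neg_one_pow_mul_choose_modEq (n : ℕ) {p M : ℕ} (hp : p.Prime) (hM : 0 < M) :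
    (-1) ^ (n * (p * M)) * (((n + 1) * (p * M) - 1).choose (p * M - 1) : ℤ) ≡
      (-1) ^ (n * M) * (((n + 1) * M - 1).choose (M - 1) : ℤ)
      [ZMOD p ^ (2 * (M.factorization p + 1))] := by
  have h := choose_mul_sub_one_modEq hp hM ((Nat.ordProj_dvd M p).mul_left n)
  rw [show p * (M + n * M) = (n + 1) * (p * M) by ring, show M + n * M = (n + 1) * M by ring] at h
  have hsign : (-1 : ℤ) ^ (n * (p * M)) * (-1) ^ (n * M * ((p - 1) * M)) = (-1) ^ (n * M) := by
    obtain ⟨q, rfl⟩ : ∃ q, p = q + 1 := ⟨p - 1, (Nat.sub_add_cancel hp.one_le).symm⟩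
    rw [← pow_add, Nat.add_sub_cancel,
      show n * ((q + 1) * M) + n * M * (q * M) = n * M + M * (M + 1) * (n * q) by ring,
      pow_add, pow_mul (-1 : ℤ) (M * (M + 1)), (Nat.even_mul_succ_self M).neg_one_pow, one_pow,
      mul_one]
  calc _ ≡ (-1) ^ (n * (p * M)) * ((-1) ^ (n * M * ((p - 1) * M)) *
        (((n + 1) * M - 1).choose (M - 1) : ℤ)) [ZMOD _] := h.mul_left _
    _ = _ := by rw [← mul_assoc, hsign]

theorem sum_divisors_moebius_mul_eq {p d : ℕ} (hp : p.Prime) (hpd : p ∣ d) (g : ℕ → ℤ) :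
    ∑ k ∈ d.divisors, μ k * g k = ∑ k ∈ d.divisors with ¬ p ∣ k, μ k * (g k - g (p * k)) := by
  have hmul : ∑ k ∈ d.divisors with p ∣ k, μ k * g k =
      ∑ k ∈ d.divisors with ¬ p ∣ k, -(μ k * g (p * k)) := by
    symm
    refine sum_of_injOn (p * ·) (fun a _ b _ h => Nat.eq_of_mul_eq_mul_left hp.pos h) ?_ ?_ ?_
    · intro k hk
      simp only [mem_coe, mem_filter, Nat.mem_divisors] at hk ⊢
      exact ⟨⟨(Nat.Coprime.mul_dvd_of_dvd_of_dvd ((hp.coprime_iff_not_dvd).2 hk.2) hpd hk.1.1),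
        hk.1.2⟩, dvd_mul_right p k⟩
    · intro i hi hnot
      simp only [mem_filter, Nat.mem_divisors] at hi
      obtain ⟨j, rfl⟩ := hi.2
      have hpj : p ∣ j := by
        by_contra hpj
        exact hnot ⟨j, by simp [hpj, (dvd_mul_left j p).trans hi.1.1, hi.1.2], rfl⟩
      have hsq : ¬ Squarefree (p * j) := fun hsq => hp.not_isUnit (hsq p (mul_dvd_mul_left p hpj))
      rw [moebius_eq_zero_of_not_squarefree hsq, zero_mul]
    · intro k hk
      simp only [mem_filter] at hk
      rw [isMultiplicative_moebius.map_mul_of_coprime ((hp.coprime_iff_not_dvd).2 hk.2),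
        moebius_apply_prime hp]
      ring
  rw [← sum_filter_add_sum_filter_not d.divisors (p ∣ ·), hmul, add_comm, ← sum_add_distrib]
  exact sum_congr rfl fun k _ => by ring

section MoebiusSum

variable {r : ℕ} {b : ℕ → ℤ}

theorem pow_factorization_dvd_sum_divisors_moebius_mul
    (hb : ∀ p M : ℕ, p.Prime → 0 < M → b (p * M) ≡ b M [ZMOD p ^ (r * (M.factorization p + 1))])
    {p : ℕ} (hp : p.Prime) (d : ℕ) :
    (p : ℤ) ^ (r * d.factorization p) ∣ ∑ k ∈ d.divisors, μ k * b (d / k) := by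
  rcases Nat.eq_zero_or_pos (d.factorization p) with h0 | hpos
  · rw [h0, mul_zero, pow_zero]
    exact one_dvd _
  have hpd : p ∣ d := Nat.dvd_of_factorization_pos hpos.ne'
  rw [sum_divisors_moebius_mul_eq hp hpd fun k => b (d / k)]
  refine dvd_sum fun k hk => dvd_mul_of_dvd_right ?_ _
  obtain ⟨hk, hpk⟩ := mem_filter.1 hk
  obtain ⟨M, hM⟩ : p * k ∣ d := Nat.Coprime.mul_dvd_of_dvd_of_dvd
    ((hp.coprime_iff_not_dvd).2 hpk) hpd (Nat.dvd_of_mem_divisors hk)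
  have hk0 : 0 < k := Nat.pos_of_mem_divisors hk
  have hM0 : M ≠ 0 := by
    rintro rfl
    simp [hM] at hk
  have hdk : d / k = p * M := by
    rw [hM, mul_comm p k, mul_assoc, Nat.mul_div_cancel_left _ hk0]
  have hdpk : d / (p * k) = M := by
    rw [hM, Nat.mul_div_cancel_left _ (Nat.mul_pos hp.pos hk0)]
  have hfac : d.factorization p = M.factorization p + 1 := by
    rw [hM, Nat.factorization_mul (Nat.mul_ne_zero hp.ne_zero hk0.ne') hM0,
      Nat.factorization_mul hp.ne_zero hk0.ne']
    simp [hp.factorization_self, Nat.factorization_eq_zero_of_not_dvd hpk, add_comm]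
  rw [hdk, hdpk, hfac]
  exact (hb p M hp (Nat.pos_of_ne_zero hM0)).symm.dvd

theorem pow_dvd_sum_divisors_moebius_mul
    (hb : ∀ p M : ℕ, p.Prime → 0 < M → b (p * M) ≡ b M [ZMOD p ^ (r * (M.factorization p + 1))])
    (d : ℕ) : (d : ℤ) ^ r ∣ ∑ k ∈ d.divisors, μ k * b (d / k) := by
  rcases eq_or_ne d 0 with rfl | hd
  · simp
  rw [← Nat.cast_pow, Int.natCast_dvd, Nat.dvd_iff_prime_pow_dvd_dvd]
  intro p j hp hpj
  have hj : j ≤ r * d.factorization p := by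
    simpa [Nat.factorization_pow] using
      (hp.pow_dvd_iff_le_factorization (pow_ne_zero r hd)).1 hpj
  refine Int.natCast_dvd.1 ?_
  push_cast
  exact (pow_dvd_pow _ hj).trans (pow_factorization_dvd_sum_divisors_moebius_mul hb hp d)

end MoebiusSum

theorem stmt10_general (n d : ℕ) :
    (((n : ℤ) + 1) * (d : ℤ) ^ 2) ∣
      ∑ k ∈ d.divisors,
        ArithmeticFunction.moebius k * (-1) ^ (n * (d / k)) *
          (((n + 1) * (d / k)).choose (d / k) : ℤ) := by
  have hterm : ∀ k ∈ d.divisors,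
      μ k * (-1) ^ (n * (d / k)) * (((n + 1) * (d / k)).choose (d / k) : ℤ) =
        (n + 1) * (μ k * ((-1) ^ (n * (d / k)) *
          (((n + 1) * (d / k) - 1).choose (d / k - 1) : ℤ))) := fun k hk => by
    rw [Nat.choose_mul_right (Nat.div_pos (Nat.divisor_le hk) (Nat.pos_of_mem_divisors hk)).ne']
    push_cast
    ring
  rw [sum_congr rfl hterm, ← mul_sum]
  exact mul_dvd_mul_left _ (pow_dvd_sum_divisors_moebius_mul
    (b := fun m => (-1) ^ (n * m) * (((n + 1) * m - 1).choose (m - 1) : ℤ))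
    (fun p M hp hM => neg_one_pow_mul_choose_modEq n hp hM) d)

/-- Integrality of the Klemm–Pandharipande invariants for the orbifold Looijenga pair
`(P(1,1,n), D1 + D2)` (Section 8): for all `n ≥ 1` and `d ≥ 1`, `(n+1) d²` divides
`∑_{k ∣ d} μ(k) (-1)^{n d/k} C((n+1) d/k, d/k)`. -/
theorem stmt10 (n d : ℕ) (hn : 1 ≤ n) (hd : 1 ≤ d) :
    (((n : ℤ) + 1) * (d : ℤ) ^ 2) ∣
      ∑ k ∈ d.divisors,
        ArithmeticFunction.moebius k * (-1) ^ (n * (d / k)) *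
          (((n + 1) * (d / k)).choose (d / k) : ℤ) :=
  stmt10_general n d
end

section
/- Let D > 1 be an integer, let j be an integer with 1 ≤ j ≤ D − 1, let σ be any integer, and let F be any function from the positive integers to an abelian group. Then ∑_{k ∣ D} μ(D/k) · (−1)^{σ·k·(j+1)} · F(gcd(k, j)) = 0. -/
/-!
Möbius inversion writes `H (gcd k j)` as `∑ i ∣ k, [i ∣ j] G i` with `G = μ * H`, so
`∑_{k ∣ D} μ(D/k) H(gcd(k, j))` is the value `[D ∣ j] G D` of `μ * ζ * ([· ∣ j] G)` at `D`; it
vanishes since `D ∤ j`. The sign fits this pattern: `(-1)^{σ k (j+1)} = (-1)^{σ gcd(k,j) (j+1)}`,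
because either `j + 1` is even or `j` is, and in the latter case `k` and `gcd(k, j)` have the same
parity.
-/

open Finset ArithmeticFunction ArithmeticFunction.Moebius

theorem sum_divisors_moebius_smul_gcd_eq_zero {A : Type*} [AddCommGroup A] {D j : ℕ}
    (hDj : ¬D ∣ j) (H : ℕ → A) :
    ∑ k ∈ D.divisors, μ (D / k) • H (k.gcd j) = 0 := by
  classical
  obtain ⟨G, hG⟩ : ∃ G : ℕ → A, ∀ n > 0, ∑ i ∈ n.divisors, G i = H n :=
    ⟨_, sum_eq_iff_sum_smul_moebius_eq.mpr fun _ _ => rfl⟩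
  have hGgcd : ∀ n > 0, ∑ i ∈ n.divisors, (if i ∣ j then G i else 0) = H (n.gcd j) := by
    intro n hn
    rw [← sum_filter, ← hG _ (Nat.gcd_pos_of_pos_left j hn)]
    congr 1
    ext i
    simp [Nat.dvd_gcd_iff, hn.ne']
  rcases D.eq_zero_or_pos with rfl | hD
  · simp
  have hinv := sum_eq_iff_sum_smul_moebius_eq.mp hGgcd D hD
  rwa [if_neg hDj, Nat.sum_divisorsAntidiagonal' (f := fun a b => μ a • H (b.gcd j))] at hinv

theorem negOnePow_mul_mul_succ_eq_gcd (σ : ℤ) (k j : ℕ) :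
    (σ * k * (j + 1)).negOnePow = (σ * (k.gcd j : ℕ) * (j + 1)).negOnePow := by
  rw [Int.negOnePow_eq_iff]
  have hpar : Even (((k : ℤ) - (k.gcd j : ℕ)) * (j + 1)) := by
    rcases Nat.even_or_odd j with hj | hj
    · refine Even.mul_right ?_ _
      have hgcd : Even (k.gcd j) ↔ Even k := by
        simp only [even_iff_two_dvd, Nat.dvd_gcd_iff, hj.two_dvd, and_true]
      rw [Int.even_sub]
      exact_mod_cast hgcd.symm
    · exact Even.mul_left (by exact_mod_cast hj.add_one) _
  convert hpar.mul_left σ using 1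
  ring

theorem stmt16_general {A : Type*} [AddCommGroup A] (D : ℕ)
    (j : ℕ) (hj1 : 1 ≤ j) (hj2 : j ≤ D - 1) (σ : ℤ) (F : ℕ → A) :
    ∑ k ∈ D.divisors,
      (ArithmeticFunction.moebius (D / k) *
          (((-1 : ℤˣ) ^ (σ * (k : ℤ) * ((j : ℤ) + 1)) : ℤˣ) : ℤ)) • F (Nat.gcd k j)
      = 0 := by
  have hDj : ¬D ∣ j := Nat.not_dvd_of_pos_of_lt (by omega) (by omega)
  calc _ = ∑ k ∈ D.divisors,
          μ (D / k) • (((σ * (k.gcd j : ℕ) * (j + 1)).negOnePow : ℤ) • F (k.gcd j)) := by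
        refine sum_congr rfl fun k _ => ?_
        rw [mul_smul, ← Int.negOnePow_def, negOnePow_mul_mul_succ_eq_gcd]
    _ = 0 := sum_divisors_moebius_smul_gcd_eq_zero hDj
        fun n => ((σ * (n : ℤ) * (j + 1)).negOnePow : ℤ) • F n

/-- The divisor-sum cancellation at the arithmetic core of the proof of Theorem 7.1:
for an integer `D > 1`, `1 ≤ j ≤ D - 1`, any integer `σ`, and any function `F` from the
positive integers to an abelian group,
`∑_{k ∣ D} μ(D/k) (-1)^{σ k (j+1)} F(gcd(k, j)) = 0`. -/
theorem stmt16 {A : Type*} [AddCommGroup A] (D : ℕ) (hD : 1 < D)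
    (j : ℕ) (hj1 : 1 ≤ j) (hj2 : j ≤ D - 1) (σ : ℤ) (F : ℕ → A) :
    ∑ k ∈ D.divisors,
      (ArithmeticFunction.moebius (D / k) *
          (((-1 : ℤˣ) ^ (σ * (k : ℤ) * ((j : ℤ) + 1)) : ℤˣ) : ℤ)) • F (Nat.gcd k j)
      = 0 :=
  stmt16_general D j hj1 hj2 σ F
end
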